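/- arXiv:2212.12805 — 8 statements merged into one kernel-verified Lean document; each statement's English description precedes it below -/
import Mathlib

section
/- Let n ≥ 3 be an integer, m₀ > 0, ρ₀ = (2m₀)^{1/(n−2)}, and ρ₀ < a < A with a^{n−2} > 2m₀. Let P, Q : [a, A] → ℝ be measurable, set m(ρ) = m₀ + P(ρ) + Q(ρ), and assume 2m(ρ) < ρ^{n−2} for all ρ ∈ [a, A]. Define φ(ρ) = √(1 − 2m(ρ)/ρ^{n−2}) and φ_S(ρ) = √(1 − 2m₀/ρ^{n−2}), and let μ be the measure on [a, A] with density ω_{n−1}ρ^{n−1}φ(ρ)^{−1} with respect to Lebesgue measure. Then ∫_{[a,A]} |φ − φ_S|² dμ ≤ (8/(a^{n−2}(a^{n−2} − 2m₀)))·(∫_{[a,A]} Q² dμ + ∫_{[a,A]} P² dμ). -/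
open MeasureTheory

set_option maxHeartbeats 1000000 in
/-- L² estimate for the difference of the Jang warping factor `φ`
and the Schwarzschild warping factor `φ_S` in terms of the L² norms of `P` and `Q`. -/
theorem warping_factor_difference_estimate
    (n : ℕ) (hn : 3 ≤ n) (m₀ a A ωn : ℝ) (hm₀ : 0 < m₀) (hω : 0 < ωn)
    (ρ₀ : ℝ) (hρ₀ : ρ₀ = (2 * m₀) ^ (((n : ℝ) - 2)⁻¹))
    (ha : ρ₀ < a) (haA : a < A) (ha2 : 2 * m₀ < a ^ (n - 2))
    (P Q : ℝ → ℝ) (hPm : Measurable P) (hQm : Measurable Q)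
    (m : ℝ → ℝ) (hm : ∀ ρ, m ρ = m₀ + P ρ + Q ρ)
    (hmlt : ∀ ρ ∈ Set.Icc a A, 2 * m ρ < ρ ^ (n - 2))
    (φ φS : ℝ → ℝ)
    (hφ : ∀ ρ, φ ρ = Real.sqrt (1 - 2 * m ρ / ρ ^ (n - 2)))
    (hφS : ∀ ρ, φS ρ = Real.sqrt (1 - 2 * m₀ / ρ ^ (n - 2)))
    (μ : Measure ℝ)
    (hμ : μ = (volume.restrict (Set.Icc a A)).withDensity
        (fun ρ => ENNReal.ofReal (ωn * ρ ^ (n - 1) * (φ ρ)⁻¹))) :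
    ∫⁻ ρ, ENNReal.ofReal (|φ ρ - φS ρ| ^ 2) ∂μ
      ≤ ENNReal.ofReal (8 / (a ^ (n - 2) * (a ^ (n - 2) - 2 * m₀))) *
        ((∫⁻ ρ, ENNReal.ofReal ((Q ρ) ^ 2) ∂μ) + ∫⁻ ρ, ENNReal.ofReal ((P ρ) ^ 2) ∂μ) := by
  have hρ₀pos : 0 < ρ₀ := by
    rw [hρ₀]; exact Real.rpow_pos_of_pos (by linarith) _
  have ha0 : 0 < a := hρ₀pos.trans ha
  set ta : ℝ := a ^ (n - 2) with hta_def
  have hta0 : 0 < ta := pow_pos ha0 _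
  have hD : 0 < ta * (ta - 2 * m₀) := mul_pos hta0 (by linarith)
  have hDnn : 0 ≤ 8 / (ta * (ta - 2 * m₀)) := by positivity
  -- pointwise estimate
  have hpt : ∀ ρ ∈ Set.Icc a A,
      |φ ρ - φS ρ| ^ 2 ≤ 8 / (ta * (ta - 2 * m₀)) * ((Q ρ) ^ 2 + (P ρ) ^ 2) := by
    intro ρ hρ
    have hρ0 : 0 < ρ := ha0.trans_le hρ.1
    set t : ℝ := ρ ^ (n - 2) with ht_def
    have ht0 : 0 < t := pow_pos hρ0 _
    have htat : ta ≤ t := pow_le_pow_left₀ ha0.le hρ.1 _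
    have h2mρ : 2 * m ρ < t := hmlt ρ hρ
    have hx : 0 < 1 - 2 * m₀ / t := by
      rw [sub_pos, div_lt_one ht0]; linarith
    have hy : 0 < 1 - 2 * m ρ / t := by
      rw [sub_pos, div_lt_one ht0]; linarith
    set sx : ℝ := Real.sqrt (1 - 2 * m₀ / t) with hsx_def
    set sy : ℝ := Real.sqrt (1 - 2 * m ρ / t) with hsy_def
    have hsx2 : sx ^ 2 = 1 - 2 * m₀ / t := Real.sq_sqrt hx.le
    have hsy2 : sy ^ 2 = 1 - 2 * m ρ / t := Real.sq_sqrt hy.le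
    have hsx0 : 0 < sx := Real.sqrt_pos.2 hx
    have hsy0 : 0 ≤ sy := Real.sqrt_nonneg _
    have hsx2' : sx ^ 2 * t = t - 2 * m₀ := by
      rw [hsx2]; field_simp
    have hsy2' : sy ^ 2 * t = t - 2 * (m₀ + P ρ + Q ρ) := by
      rw [hsy2, hm ρ]; field_simp
    have hd : (sy ^ 2 - sx ^ 2) * t = -2 * (P ρ + Q ρ) := by linear_combination hsy2' - hsx2'
    have key : (sy - sx) ^ 2 * (t * (t - 2 * m₀)) ≤ 4 * (P ρ + Q ρ) ^ 2 := by
      have h1 : 4 * (P ρ + Q ρ) ^ 2 = ((sy ^ 2 - sx ^ 2) * t) ^ 2 := by rw [hd]; ring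
      have h2 : (sy - sx) ^ 2 * (t * (t - 2 * m₀)) = (sy - sx) ^ 2 * sx ^ 2 * t ^ 2 := by
        rw [← hsx2']; ring
      rw [h1, h2]
      nlinarith [mul_nonneg (mul_nonneg (sq_nonneg ((sy - sx) * t)) hsy0)
        (by positivity : (0:ℝ) ≤ sy + 2 * sx)]
    have hφval : φ ρ - φS ρ = sy - sx := by rw [hφ, hφS]
    rw [hφval, sq_abs]
    rw [div_mul_eq_mul_div, le_div_iff₀ hD]
    have hmono : (sy - sx) ^ 2 * (ta * (ta - 2 * m₀)) ≤ (sy - sx) ^ 2 * (t * (t - 2 * m₀)) := by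
      apply mul_le_mul_of_nonneg_left _ (sq_nonneg _)
      nlinarith
    nlinarith [key, sq_nonneg (P ρ - Q ρ)]
  -- a.e. membership in Icc
  have hae : ∀ᵐ ρ ∂μ, ρ ∈ Set.Icc a A := by
    rw [hμ]
    exact (ae_restrict_mem measurableSet_Icc).filter_mono
      (withDensity_absolutelyContinuous _ _).ae_le
  have hstep1 : ∫⁻ ρ, ENNReal.ofReal (|φ ρ - φS ρ| ^ 2) ∂μ ≤
      ∫⁻ ρ, ENNReal.ofReal (8 / (ta * (ta - 2 * m₀))) *
        (ENNReal.ofReal ((Q ρ) ^ 2) + ENNReal.ofReal ((P ρ) ^ 2)) ∂μ := by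
    refine lintegral_mono_ae (hae.mono fun ρ hρ => ?_)
    rw [← ENNReal.ofReal_add (sq_nonneg _) (sq_nonneg _),
      ← ENNReal.ofReal_mul hDnn]
    exact ENNReal.ofReal_le_ofReal (hpt ρ hρ)
  refine hstep1.trans_eq ?_
  rw [lintegral_const_mul' _ _ ENNReal.ofReal_ne_top,
    lintegral_add_right _ ((hPm.pow_const 2).ennreal_ofReal)]
end

section
/- Let n ≥ 3 be an integer, m₀, δ, C, D̃ > 0, ρ₀ = (2m₀)^{1/(n−2)}, and ρ₀ < a < A with a^{n−2} > 2m₀. Let P, Q : [a, A] → ℝ be measurable with 0 ≤ P(ρ) ≤ δ·m₀, set m(ρ) = m₀ + P(ρ) + Q(ρ) with 2m(ρ) < ρ^{n−2}, define φ(ρ) = √(1 − 2m(ρ)/ρ^{n−2}) and φ_S(ρ) = √(1 − 2m₀/ρ^{n−2}), and let μ be the measure on [a,A] with density ω_{n−1}ρ^{n−1}φ(ρ)^{−1}. Assume ∫_{[a,A]} Q² dμ ≤ δ·ω_{n−1}·m₀·A^{2n−1}·C and ∫_a^A φ(ρ)^{−1} dρ ≤ D̃. Then ∫_{[a,A]}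 |φ − φ_S|² dμ ≤ (8/(a^{n−2}(a^{n−2} − 2m₀)))·(δ·ω_{n−1}·m₀·A^{2n−1}·C + δ²·m₀²·ω_{n−1}·A^{n−1}·D̃). -/
open MeasureTheory


private lemma sqrt_diff_sq_le (x y : ℝ) (hx : 0 < x) (hy : 0 < y) :
    |Real.sqrt x - Real.sqrt y| ^ 2 ≤ (x - y) ^ 2 / y := by
  have hsx := Real.sq_sqrt hx.le
  have hsy := Real.sq_sqrt hy.le
  have hsx0 := Real.sqrt_nonneg x
  have hsy0 := Real.sqrt_nonneg y
  rw [sq_abs, le_div_iff₀ hy]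
  nlinarith [sq_nonneg (Real.sqrt x - Real.sqrt y),
    mul_nonneg (mul_nonneg hsx0 hsy0) (sq_nonneg (Real.sqrt x - Real.sqrt y))]

private lemma alg_bound (r m₀ p q B c : ℝ) (hr : 0 < r) (hy : 0 < r - 2 * m₀)
    (hB : 0 < B) (hB2 : 0 < B - 2 * m₀) (hBr : B ≤ r) (hc : 0 ≤ c)
    (hpq : 4 * (p + q) ^ 2 ≤ 8 * (q ^ 2 + c)) :
    ((1 - 2 * (m₀ + p + q) / r) - (1 - 2 * m₀ / r)) ^ 2 / (1 - 2 * m₀ / r)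
      ≤ 8 / (B * (B - 2 * m₀)) * (q ^ 2 + c) := by
  have hyy : (1 - 2 * m₀ / r) = (r - 2 * m₀) / r := by field_simp
  have h1 : ((1 - 2 * (m₀ + p + q) / r) - (1 - 2 * m₀ / r)) ^ 2 / (1 - 2 * m₀ / r)
      = 4 * (p + q) ^ 2 / (r * (r - 2 * m₀)) := by
    rw [hyy]; field_simp; ring
  rw [h1, show (8 : ℝ) / (B * (B - 2 * m₀)) * (q ^ 2 + c)
      = 8 * (q ^ 2 + c) / (B * (B - 2 * m₀)) by ring]
  apply div_le_div₀ (by nlinarith [sq_nonneg q]) hpq (mul_pos hB hB2)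
  apply mul_le_mul hBr (by linarith) hB2.le hr.le

/-- Quantitative L² convergence of the warping factor `φ` to the
Schwarzschild warping factor `φ_S` as `δ → 0`. -/
theorem warping_factor_L2_convergence
    (n : ℕ) (hn : 3 ≤ n) (m₀ δ C Dt ωn a A : ℝ)
    (hm₀ : 0 < m₀) (hδ : 0 < δ) (hC : 0 < C) (hDt : 0 < Dt) (hω : 0 < ωn)
    (ρ₀ : ℝ) (hρ₀ : ρ₀ = (2 * m₀) ^ (((n : ℝ) - 2)⁻¹))
    (ha : ρ₀ < a) (haA : a < A) (ha2 : 2 * m₀ < a ^ (n - 2))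
    (P Q : ℝ → ℝ) (hPm : Measurable P) (hQm : Measurable Q)
    (hP : ∀ ρ ∈ Set.Icc a A, 0 ≤ P ρ ∧ P ρ ≤ δ * m₀)
    (m : ℝ → ℝ) (hm : ∀ ρ, m ρ = m₀ + P ρ + Q ρ)
    (hmlt : ∀ ρ ∈ Set.Icc a A, 2 * m ρ < ρ ^ (n - 2))
    (φ φS : ℝ → ℝ)
    (hφ : ∀ ρ, φ ρ = Real.sqrt (1 - 2 * m ρ / ρ ^ (n - 2)))
    (hφS : ∀ ρ, φS ρ = Real.sqrt (1 - 2 * m₀ / ρ ^ (n - 2)))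
    (μ : Measure ℝ)
    (hμ : μ = (volume.restrict (Set.Icc a A)).withDensity
        (fun ρ => ENNReal.ofReal (ωn * ρ ^ (n - 1) * (φ ρ)⁻¹)))
    (hQ2 : ∫⁻ ρ, ENNReal.ofReal ((Q ρ) ^ 2) ∂μ
        ≤ ENNReal.ofReal (δ * ωn * m₀ * A ^ (2 * n - 1) * C))
    (hdepth : ∫⁻ ρ in Set.Icc a A, ENNReal.ofReal ((φ ρ)⁻¹) ≤ ENNReal.ofReal Dt) :
    ∫⁻ ρ, ENNReal.ofReal (|φ ρ - φS ρ| ^ 2) ∂μ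
      ≤ ENNReal.ofReal (8 / (a ^ (n - 2) * (a ^ (n - 2) - 2 * m₀)) *
          (δ * ωn * m₀ * A ^ (2 * n - 1) * C + δ ^ 2 * m₀ ^ 2 * ωn * A ^ (n - 1) * Dt)) := by
  -- basic positivity
  have hρ₀pos : 0 < ρ₀ := by
    rw [hρ₀]; exact Real.rpow_pos_of_pos (by linarith) _
  have ha0 : 0 < a := lt_trans hρ₀pos ha
  have hA0 : 0 < A := lt_trans ha0 haA
  set B : ℝ := a ^ (n - 2) with hBdef
  have hB : 0 < B := pow_pos ha0 _
  have hB2 : 0 < B - 2 * m₀ := by linarith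
  set K : ℝ := 8 / (B * (B - 2 * m₀)) with hKdef
  have hK : 0 ≤ K := le_of_lt (div_pos (by norm_num) (mul_pos hB hB2))
  set c : ℝ := (δ * m₀) ^ 2 with hcdef
  have hc : 0 ≤ c := sq_nonneg _
  -- measurability
  have hφm : Measurable φ := by
    have h : φ = fun ρ => Real.sqrt (1 - 2 * (m₀ + P ρ + Q ρ) / ρ ^ (n - 2)) := by
      funext ρ; rw [hφ, hm]
    rw [h]
    fun_prop
  have hφSm : Measurable φS := by
    have h : φS = fun ρ => Real.sqrt (1 - 2 * m₀ / ρ ^ (n - 2)) := funext hφS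
    rw [h]
    fun_prop
  set d : ℝ → ENNReal := fun ρ => ENNReal.ofReal (ωn * ρ ^ (n - 1) * (φ ρ)⁻¹) with hddef
  have hdm : Measurable d := by fun_prop
  -- pointwise bound on Icc a A
  have hpt : ∀ ρ ∈ Set.Icc a A, |φ ρ - φS ρ| ^ 2 ≤ K * (Q ρ ^ 2 + c) := by
    intro ρ hρ
    have hρpos : 0 < ρ := lt_of_lt_of_le ha0 hρ.1
    have hr : 0 < ρ ^ (n - 2) := pow_pos hρpos _
    have hBr : B ≤ ρ ^ (n - 2) := pow_le_pow_left₀ ha0.le hρ.1 _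
    have hy : 0 < 1 - 2 * m₀ / ρ ^ (n - 2) := by
      rw [sub_pos, div_lt_one hr]; linarith
    have hx : 0 < 1 - 2 * m ρ / ρ ^ (n - 2) := by
      rw [sub_pos, div_lt_one hr]; exact hmlt ρ hρ
    have hsqrt : |φ ρ - φS ρ| ^ 2
        ≤ ((1 - 2 * m ρ / ρ ^ (n - 2)) - (1 - 2 * m₀ / ρ ^ (n - 2))) ^ 2
          / (1 - 2 * m₀ / ρ ^ (n - 2)) := by
      rw [hφ, hφS]; exact sqrt_diff_sq_le _ _ hx hy
    refine hsqrt.trans ?_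
    rw [hm, hKdef]
    have hPρ := hP ρ hρ
    have hpq : 4 * (P ρ + Q ρ) ^ 2 ≤ 8 * (Q ρ ^ 2 + c) := by
      rw [hcdef]; nlinarith [sq_nonneg (P ρ - Q ρ), hPρ.1, hPρ.2, sq_nonneg (Q ρ)]
    exact alg_bound _ _ _ _ _ _ hr (by linarith [hBr]) hB hB2 hBr hc hpq
  -- measure of whole space
  have hφinv_nonneg : ∀ ρ, 0 ≤ (φ ρ)⁻¹ := by
    intro ρ; rw [hφ]; positivity
  have hμuniv : μ Set.univ ≤ ENNReal.ofReal (ωn * A ^ (n - 1) * Dt) := by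
    rw [hμ, withDensity_apply _ MeasurableSet.univ, Measure.restrict_restrict MeasurableSet.univ,
      Set.univ_inter]
    calc ∫⁻ ρ in Set.Icc a A, d ρ
        ≤ ∫⁻ ρ in Set.Icc a A, ENNReal.ofReal (ωn * A ^ (n - 1)) * ENNReal.ofReal ((φ ρ)⁻¹) := by
          refine setLIntegral_mono (by fun_prop) ?_
          intro ρ hρ
          rw [← ENNReal.ofReal_mul (by positivity)]
          apply ENNReal.ofReal_le_ofReal
          have hρA : ρ ^ (n - 1) ≤ A ^ (n - 1) :=
            pow_le_pow_left₀ (le_trans ha0.le hρ.1) hρ.2 _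
          have := hφinv_nonneg ρ
          nlinarith [mul_le_mul_of_nonneg_right (mul_le_mul_of_nonneg_left hρA hω.le) this]
      _ = ENNReal.ofReal (ωn * A ^ (n - 1)) * ∫⁻ ρ in Set.Icc a A, ENNReal.ofReal ((φ ρ)⁻¹) :=
          lintegral_const_mul' _ _ ENNReal.ofReal_ne_top
      _ ≤ ENNReal.ofReal (ωn * A ^ (n - 1)) * ENNReal.ofReal Dt :=
          mul_le_mul_right hdepth _
      _ = ENNReal.ofReal (ωn * A ^ (n - 1) * Dt) := by
          rw [← ENNReal.ofReal_mul (by positivity)]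
  -- main computation
  have hrw : ∀ (g : ℝ → ENNReal), Measurable g →
      ∫⁻ ρ, g ρ ∂μ = ∫⁻ ρ in Set.Icc a A, d ρ * g ρ := by
    intro g hg
    rw [hμ, lintegral_withDensity_eq_lintegral_mul _ hdm hg]
    rfl
  have hg1m : Measurable fun ρ => ENNReal.ofReal (|φ ρ - φS ρ| ^ 2) := by fun_prop
  have hg2m : Measurable fun ρ => ENNReal.ofReal (K * (Q ρ ^ 2 + c)) := by fun_prop
  calc ∫⁻ ρ, ENNReal.ofReal (|φ ρ - φS ρ| ^ 2) ∂μ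
      = ∫⁻ ρ in Set.Icc a A, d ρ * ENNReal.ofReal (|φ ρ - φS ρ| ^ 2) := hrw _ hg1m
    _ ≤ ∫⁻ ρ in Set.Icc a A, d ρ * ENNReal.ofReal (K * (Q ρ ^ 2 + c)) := by
        refine setLIntegral_mono (by fun_prop) ?_
        intro ρ hρ
        exact mul_le_mul_right (ENNReal.ofReal_le_ofReal (hpt ρ hρ)) _
    _ = ∫⁻ ρ, ENNReal.ofReal (K * (Q ρ ^ 2 + c)) ∂μ := (hrw _ hg2m).symm
    _ = ENNReal.ofReal K * ∫⁻ ρ, (ENNReal.ofReal (Q ρ ^ 2) + ENNReal.ofReal c) ∂μ := by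
        rw [← lintegral_const_mul' _ _ ENNReal.ofReal_ne_top]
        congr 1; funext ρ
        rw [ENNReal.ofReal_mul hK, ENNReal.ofReal_add (sq_nonneg _) hc]
    _ = ENNReal.ofReal K * ((∫⁻ ρ, ENNReal.ofReal (Q ρ ^ 2) ∂μ) + ENNReal.ofReal c * μ Set.univ) := by
        rw [lintegral_add_right _ measurable_const, lintegral_const]
    _ ≤ ENNReal.ofReal K * (ENNReal.ofReal (δ * ωn * m₀ * A ^ (2 * n - 1) * C)
          + ENNReal.ofReal c * ENNReal.ofReal (ωn * A ^ (n - 1) * Dt)) := by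
        exact mul_le_mul_right (add_le_add hQ2 (mul_le_mul_right hμuniv _)) _
    _ = ENNReal.ofReal (K * (δ * ωn * m₀ * A ^ (2 * n - 1) * C
          + δ ^ 2 * m₀ ^ 2 * ωn * A ^ (n - 1) * Dt)) := by
        rw [← ENNReal.ofReal_mul hc,
          show c * (ωn * A ^ (n - 1) * Dt) = δ ^ 2 * m₀ ^ 2 * ωn * A ^ (n - 1) * Dt by
            rw [hcdef]; ring,
          ← ENNReal.ofReal_add (by positivity) (by positivity),
          ← ENNReal.ofReal_mul hK]
end

section
/- Let n ≥ 3 be an integer, m₀ > 0, ρ₀ = (2m₀)^{1/(n−2)}, and ρ₀ < ρ_δ < A. Let φ : [ρ_δ, A] → (0,∞) be measurable, set φ_S(ρ) = √(1 − 2m₀/ρ^{n−2}), and let μ be the measure on [ρ_δ, A] with density ω_{n−1}ρ^{n−1}φ(ρ)^{−1} with respect to Lebesgue measure. Then |∫_{ρ_δ}^A φ(ρ)^{−1} dρ − ∫_{ρ_δ}^A φ_S(ρ)^{−1} dρ|² ≤ (μ([ρ_δ, A])/(ω_{n−1}·φ_S(ρ_δ)·ρ_δ^{n−1})²)·∫_{[ρ_δ,A]}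 |φ − φ_S|² dμ. -/
open MeasureTheory ENNReal

/-- Cauchy–Schwarz comparison of radial distances in the Jang metric
and in Schwarzschild in terms of the L² distance of the warping factors. -/
theorem radial_distance_comparison
    (n : ℕ) (hn : 3 ≤ n) (m₀ ωn : ℝ) (hm₀ : 0 < m₀) (hω : 0 < ωn)
    (ρ₀ ρδ A : ℝ) (hρ₀ : ρ₀ = (2 * m₀) ^ (((n : ℝ) - 2)⁻¹))
    (hρδ : ρ₀ < ρδ) (hρδA : ρδ < A)
    (φ : ℝ → ℝ) (hφm : Measurable φ) (hφpos : ∀ ρ ∈ Set.Icc ρδ A, 0 < φ ρ)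
    (φS : ℝ → ℝ) (hφS : ∀ ρ, φS ρ = Real.sqrt (1 - 2 * m₀ / ρ ^ (n - 2)))
    (μ : Measure ℝ)
    (hμ : μ = (volume.restrict (Set.Icc ρδ A)).withDensity
        (fun ρ => ENNReal.ofReal (ωn * ρ ^ (n - 1) * (φ ρ)⁻¹))) :
    ENNReal.ofReal
        (|(∫ ρ in Set.Icc ρδ A, (φ ρ)⁻¹) - ∫ ρ in Set.Icc ρδ A, (φS ρ)⁻¹| ^ 2)
      ≤ (μ (Set.Icc ρδ A) / ENNReal.ofReal ((ωn * φS ρδ * ρδ ^ (n - 1)) ^ 2)) *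
          ∫⁻ ρ, ENNReal.ofReal (|φ ρ - φS ρ| ^ 2) ∂μ := by
  set I : Set ℝ := Set.Icc ρδ A with hI
  -- basic positivity facts
  have h2m : (0:ℝ) < 2 * m₀ := by linarith
  have hρ₀pos : 0 < ρ₀ := hρ₀ ▸ Real.rpow_pos_of_pos h2m _
  have hρδpos : 0 < ρδ := hρ₀pos.trans hρδ
  have hcast : ((n - 2 : ℕ) : ℝ) = (n : ℝ) - 2 := by
    rw [Nat.cast_sub (by omega : 2 ≤ n)]; norm_num
  have hn3 : (3:ℝ) ≤ (n:ℝ) := by exact_mod_cast hn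
  have hρ₀pow : ρ₀ ^ (n - 2) = 2 * m₀ := by
    rw [hρ₀, ← Real.rpow_natCast ((2 * m₀) ^ (((n : ℝ) - 2)⁻¹)) (n - 2),
      ← Real.rpow_mul h2m.le, hcast, inv_mul_cancel₀ (by linarith), Real.rpow_one]
  have hpow : ∀ ρ ∈ I, 2 * m₀ < ρ ^ (n - 2) := by
    intro ρ hρ
    calc 2 * m₀ = ρ₀ ^ (n - 2) := hρ₀pow.symm
      _ < ρ ^ (n - 2) :=
        pow_lt_pow_left₀ (hρδ.trans_le hρ.1) hρ₀pos.le (by omega)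
  have hρpos : ∀ ρ ∈ I, 0 < ρ := fun ρ hρ => hρδpos.trans_le hρ.1
  have hφSpos : ∀ ρ ∈ I, 0 < φS ρ := by
    intro ρ hρ
    rw [hφS]
    apply Real.sqrt_pos.mpr
    rw [sub_pos, div_lt_one (pow_pos (hρpos ρ hρ) _)]
    exact hpow ρ hρ
  have hρδI : ρδ ∈ I := ⟨le_refl _, hρδA.le⟩
  have hφSδpos : 0 < φS ρδ := hφSpos ρδ hρδI
  have hφSmono : ∀ ρ ∈ I, φS ρδ ≤ φS ρ := by
    intro ρ hρ
    rw [hφS, hφS]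
    apply Real.sqrt_le_sqrt
    have h1 : ρδ ^ (n - 2) ≤ ρ ^ (n - 2) := pow_le_pow_left₀ hρδpos.le hρ.1 _
    have h2 : (0:ℝ) < ρδ ^ (n - 2) := pow_pos hρδpos _
    have : 2 * m₀ / ρ ^ (n - 2) ≤ 2 * m₀ / ρδ ^ (n - 2) := by gcongr
    linarith
  -- the constant
  set C : ℝ := ωn * φS ρδ * ρδ ^ (n - 1) with hC
  have hCpos : 0 < C := by
    apply mul_pos (mul_pos hω hφSδpos) (pow_pos hρδpos _)
  have hC0 : ENNReal.ofReal C ≠ 0 := (ENNReal.ofReal_pos.mpr hCpos).ne'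
  have hCtop : ENNReal.ofReal C ≠ ⊤ := ENNReal.ofReal_ne_top
  -- measurability
  have hφSm : Measurable φS := by
    have hfe : φS = fun ρ => Real.sqrt (1 - 2 * m₀ / ρ ^ (n - 2)) := funext hφS
    rw [hfe]
    exact Real.continuous_sqrt.measurable.comp
      (measurable_const.sub (measurable_const.div (measurable_id.pow_const _)))
  have hdens : Measurable (fun ρ : ℝ => ENNReal.ofReal (ωn * ρ ^ (n - 1) * (φ ρ)⁻¹)) :=
    ENNReal.measurable_ofReal.comp ((measurable_const.mul (measurable_id.pow_const _)).mul hφm.inv)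
  have hg : Measurable (fun ρ : ℝ => ENNReal.ofReal |φ ρ - φS ρ|) :=
    ENNReal.measurable_ofReal.comp (hφm.sub hφSm).abs
  -- continuity/integrability of φS⁻¹ on I
  have hφScont : ContinuousOn φS I := by
    have : ContinuousOn (fun ρ : ℝ => Real.sqrt (1 - 2 * m₀ / ρ ^ (n - 2))) I := by
      apply Real.continuous_sqrt.comp_continuousOn
      exact continuousOn_const.sub (continuousOn_const.div (continuous_pow _).continuousOn
        (fun x hx => (pow_pos (hρpos x hx) _).ne'))
    exact this.congr (fun x _ => hφS x)
  have hb : IntegrableOn (fun ρ => (φS ρ)⁻¹) I volume :=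
    (hφScont.inv₀ (fun x hx => (hφSpos x hx).ne')).integrableOn_compact isCompact_Icc
  set K : ℝ≥0∞ := ∫⁻ ρ in I, ENNReal.ofReal |(φ ρ)⁻¹ - (φS ρ)⁻¹| with hKdef
  -- Step 1
  have h1 : ENNReal.ofReal |(∫ ρ in I, (φ ρ)⁻¹) - ∫ ρ in I, (φS ρ)⁻¹| ≤ K := by
    rcases eq_or_ne K ⊤ with h | h
    · rw [h]; exact le_top
    · have hmeas : Measurable (fun ρ => (φ ρ)⁻¹ - (φS ρ)⁻¹) := hφm.inv.sub hφSm.inv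
      have hdiff : IntegrableOn (fun ρ => (φ ρ)⁻¹ - (φS ρ)⁻¹) I volume := by
        refine ⟨hmeas.aestronglyMeasurable, ?_⟩
        have hfin : (∫⁻ ρ in I, (‖(φ ρ)⁻¹ - (φS ρ)⁻¹‖ₑ : ℝ≥0∞)) < ⊤ := by
          simp_rw [Real.enorm_eq_ofReal_abs]
          exact lt_top_iff_ne_top.mpr h
        exact hfin
      have ha : IntegrableOn (fun ρ => (φ ρ)⁻¹) I volume := by
        have h' := hdiff.add hb
        have he : (fun ρ => (φ ρ)⁻¹)
            = ((fun ρ => (φ ρ)⁻¹ - (φS ρ)⁻¹) + fun ρ => (φS ρ)⁻¹) := by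
          funext ρ; simp
        rw [IntegrableOn, he]; exact h'
      rw [← integral_sub ha hb]
      calc ENNReal.ofReal |∫ ρ in I, ((φ ρ)⁻¹ - (φS ρ)⁻¹)|
          ≤ ENNReal.ofReal (∫ ρ in I, |(φ ρ)⁻¹ - (φS ρ)⁻¹|) := by
            apply ENNReal.ofReal_le_ofReal
            simpa [Real.norm_eq_abs] using
              norm_integral_le_integral_norm (μ := volume.restrict I)
                (fun ρ => (φ ρ)⁻¹ - (φS ρ)⁻¹)
        _ = K := ofReal_integral_eq_lintegral_ofReal hdiff.abs
            (Filter.Eventually.of_forall fun _ => abs_nonneg _)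
  -- Step 2: pointwise bound and Step 3
  set J : ℝ≥0∞ := ∫⁻ ρ in I,
      ENNReal.ofReal |φ ρ - φS ρ| * ENNReal.ofReal (ωn * ρ ^ (n - 1) * (φ ρ)⁻¹) with hJdef
  have h3 : K ≤ (ENNReal.ofReal C)⁻¹ * J := by
    rw [hJdef, ← lintegral_const_mul' _ _ (ENNReal.inv_ne_top.mpr hC0)]
    apply setLIntegral_mono (measurable_const.mul (hg.mul hdens))
    intro ρ hρ
    have hφρ : 0 < φ ρ := hφpos ρ hρ
    have hφSρ : 0 < φS ρ := hφSpos ρ hρ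
    simp only [Pi.mul_apply]
    rw [← ENNReal.ofReal_mul (abs_nonneg _), ← ENNReal.div_eq_inv_mul,
      ENNReal.le_div_iff_mul_le (Or.inl hC0) (Or.inl hCtop),
      ← ENNReal.ofReal_mul (abs_nonneg _)]
    apply ENNReal.ofReal_le_ofReal
    -- the real pointwise inequality
    have habs : |(φ ρ)⁻¹ - (φS ρ)⁻¹| = |φ ρ - φS ρ| / (φ ρ * φS ρ) := by
      rw [inv_sub_inv hφρ.ne' hφSρ.ne', abs_div, abs_of_pos (mul_pos hφρ hφSρ),
        abs_sub_comm]
    rw [habs]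
    have hm1 : φS ρδ * ρδ ^ (n - 1) ≤ φS ρ * ρ ^ (n - 1) :=
      mul_le_mul (hφSmono ρ hρ) (pow_le_pow_left₀ hρδpos.le hρ.1 _)
        (pow_pos hρδpos _).le hφSρ.le
    rw [div_mul_eq_mul_div, div_le_iff₀ (mul_pos hφρ hφSρ)]
    have key : ωn * |φ ρ - φS ρ| * (φS ρδ * ρδ ^ (n - 1)) ≤
        ωn * |φ ρ - φS ρ| * (φS ρ * ρ ^ (n - 1)) :=
      mul_le_mul_of_nonneg_left hm1 (by positivity)
    have hC' : C = ωn * φS ρδ * ρδ ^ (n - 1) := hC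
    rw [hC']
    have hexp : |φ ρ - φS ρ| * (ωn * ρ ^ (n - 1) * (φ ρ)⁻¹) * (φ ρ * φS ρ)
        = ωn * |φ ρ - φS ρ| * (φS ρ * ρ ^ (n - 1)) := by
      field_simp
    rw [hexp]
    nlinarith [key]
  -- Step 4: change of measure
  have h4 : J = ∫⁻ ρ, ENNReal.ofReal |φ ρ - φS ρ| ∂μ := by
    rw [hμ, lintegral_withDensity_eq_lintegral_mul _ hdens hg, hJdef]
    exact lintegral_congr fun ρ => (mul_comm _ _)
  -- Step 5: Cauchy–Schwarz
  set L : ℝ≥0∞ := ∫⁻ ρ, ENNReal.ofReal (|φ ρ - φS ρ| ^ 2) ∂μ with hLdef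
  have hμuniv : μ Set.univ = μ I := by
    rw [hμ, withDensity_apply _ MeasurableSet.univ, withDensity_apply _ measurableSet_Icc,
      Measure.restrict_univ, Measure.restrict_restrict measurableSet_Icc, Set.inter_self]
  have h5 : (∫⁻ ρ, ENNReal.ofReal |φ ρ - φS ρ| ∂μ) ^ 2 ≤ μ I * L := by
    have hconj : Real.HolderConjugate 2 2 := Real.HolderConjugate.two_two
    have hcs := ENNReal.lintegral_mul_le_Lp_mul_Lq μ hconj
      (measurable_const.aemeasurable : AEMeasurable (fun _ : ℝ => (1:ℝ≥0∞)) μ)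
      hg.aemeasurable
    simp only [Pi.mul_apply, one_mul, ENNReal.one_rpow, lintegral_one] at hcs
    have hL2 : (∫⁻ ρ, ENNReal.ofReal |φ ρ - φS ρ| ^ (2:ℝ) ∂μ) = L := by
      rw [hLdef]
      refine lintegral_congr fun ρ => ?_
      rw [show (2:ℝ) = ((2:ℕ):ℝ) by norm_num, ENNReal.rpow_natCast,
        ← ENNReal.ofReal_pow (abs_nonneg _)]
    rw [hL2, hμuniv] at hcs
    calc (∫⁻ ρ, ENNReal.ofReal |φ ρ - φS ρ| ∂μ) ^ 2
        ≤ ((μ I) ^ (1/2 : ℝ) * L ^ (1/2 : ℝ)) ^ 2 := pow_le_pow_left₀ zero_le hcs 2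
      _ = μ I * L := by
          rw [mul_pow, ← ENNReal.rpow_natCast ((μ I) ^ (1/2 : ℝ)) 2,
            ← ENNReal.rpow_natCast (L ^ (1/2 : ℝ)) 2, ← ENNReal.rpow_mul, ← ENNReal.rpow_mul]
          norm_num
  -- Assemble
  calc ENNReal.ofReal (|(∫ ρ in I, (φ ρ)⁻¹) - ∫ ρ in I, (φS ρ)⁻¹| ^ 2)
      = (ENNReal.ofReal |(∫ ρ in I, (φ ρ)⁻¹) - ∫ ρ in I, (φS ρ)⁻¹|) ^ 2 :=
        ENNReal.ofReal_pow (abs_nonneg _) 2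
    _ ≤ K ^ 2 := pow_le_pow_left₀ zero_le h1 2
    _ ≤ ((ENNReal.ofReal C)⁻¹ * J) ^ 2 := pow_le_pow_left₀ zero_le h3 2
    _ = ((ENNReal.ofReal C) ^ 2)⁻¹ * (∫⁻ ρ, ENNReal.ofReal |φ ρ - φS ρ| ∂μ) ^ 2 := by
        rw [h4, mul_pow, ENNReal.inv_pow]
    _ ≤ ((ENNReal.ofReal C) ^ 2)⁻¹ * (μ I * L) := mul_le_mul_right h5 _
    _ = (μ I / ENNReal.ofReal ((ωn * φS ρδ * ρδ ^ (n - 1)) ^ 2)) * L := by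
        rw [← hC, ENNReal.ofReal_pow hCpos.le, ENNReal.div_eq_inv_mul]
        ring
end

section
/- Let n ≥ 3 be an integer, m₀ > 0, ρ₀ = (2m₀)^{1/(n−2)}, A > ρ₀, φ_S(ρ) = √(1 − 2m₀/ρ^{n−2}), and let D̃ = ∫_{ρ₀}^A φ_S(ρ)^{−1} dρ (a finite improper integral). Fix c ∈ (0, A−ρ₀). Suppose ρ_δ ∈ [ρ₀ + c, A), φ : [ρ_δ, A] → (0,∞) is measurable with ∫_{ρ_δ}^A φ(ρ)^{−1} dρ = D̃, and μ is the measure on [ρ_δ, A] with density ω_{n−1}ρ^{n−1}φ(ρ)^{−1}. Then ∫_{[ρ_δ,A]} |φ − φ_S|² dμ ≥ (ω_{n−1}·φ_S(ρ₀+c)²·ρ₀^{2(n−1)}/(A^{n−1}·D̃))·(∫_{ρ₀}^{ρ₀+c} φ_S(ρ)^{−1} dρ)². -/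
open MeasureTheory
open scoped ENNReal

/-- Explicit positive lower bound on the L² distance of the warping
factors whenever the inner radius `ρδ` stays at least `c` above the horizon
radius `ρ₀`, given that the radial depth of `[ρδ, A]` in the Jang metric equals
the Schwarzschild depth `D̃`. -/
theorem warping_factor_L2_lower_bound
    (n : ℕ) (hn : 3 ≤ n) (m₀ ωn : ℝ) (hm₀ : 0 < m₀) (hω : 0 < ωn)
    (ρ₀ A : ℝ) (hρ₀ : ρ₀ = (2 * m₀) ^ (((n : ℝ) - 2)⁻¹)) (hA : ρ₀ < A)
    (φS : ℝ → ℝ) (hφS : ∀ ρ, φS ρ = Real.sqrt (1 - 2 * m₀ / ρ ^ (n - 2)))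
    (Dt : ℝ) (hDt : Dt = ∫ ρ in Set.Ioc ρ₀ A, (φS ρ)⁻¹)
    (c : ℝ) (hc : 0 < c) (hcA : c < A - ρ₀)
    (ρδ : ℝ) (hρδ1 : ρ₀ + c ≤ ρδ) (hρδ2 : ρδ < A)
    (φ : ℝ → ℝ) (hφm : Measurable φ) (hφpos : ∀ ρ ∈ Set.Icc ρδ A, 0 < φ ρ)
    (hdepth : ∫⁻ ρ in Set.Icc ρδ A, ENNReal.ofReal ((φ ρ)⁻¹) = ENNReal.ofReal Dt)
    (μ : Measure ℝ)
    (hμ : μ = (volume.restrict (Set.Icc ρδ A)).withDensity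
        (fun ρ => ENNReal.ofReal (ωn * ρ ^ (n - 1) * (φ ρ)⁻¹))) :
    ENNReal.ofReal (ωn * (φS (ρ₀ + c)) ^ 2 * ρ₀ ^ (2 * (n - 1)) / (A ^ (n - 1) * Dt) *
        (∫ ρ in Set.Ioc ρ₀ (ρ₀ + c), (φS ρ)⁻¹) ^ 2)
      ≤ ∫⁻ ρ, ENNReal.ofReal (|φ ρ - φS ρ| ^ 2) ∂μ := by
  -- Basic positivity facts
  have h2m : (0:ℝ) < 2 * m₀ := by linarith
  have hρ₀pos : 0 < ρ₀ := hρ₀ ▸ Real.rpow_pos_of_pos h2m _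
  have hApos : 0 < A := hρ₀pos.trans hA
  have hn2 : (n : ℝ) - 2 = ((n - 2 : ℕ) : ℝ) := by
    rw [Nat.cast_sub (by omega)]; norm_num
  have hρ₀' : ρ₀ = (2 * m₀) ^ ((((n - 2 : ℕ) : ℝ))⁻¹) := by rw [hρ₀, hn2]
  have hpow : ρ₀ ^ (n - 2) = 2 * m₀ := by
    rw [hρ₀']; exact Real.rpow_inv_natCast_pow h2m.le (by omega)
  have hgt : ∀ ρ, ρ₀ < ρ → 2 * m₀ < ρ ^ (n - 2) := by
    intro ρ hρ
    rw [← hpow]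
    exact pow_lt_pow_left₀ hρ hρ₀pos.le (by omega)
  have hφSpos : ∀ ρ, ρ₀ < ρ → 0 < φS ρ := by
    intro ρ hρ
    rw [hφS]
    apply Real.sqrt_pos.mpr
    have h1 : 0 < ρ ^ (n - 2) := pow_pos (hρ₀pos.trans hρ) _
    exact sub_pos.mpr ((div_lt_one h1).mpr (hgt ρ hρ))
  have hφSnn : ∀ ρ, 0 ≤ φS ρ := fun ρ => (hφS ρ) ▸ Real.sqrt_nonneg _
  have hφSmono : ∀ a b : ℝ, ρ₀ < a → a ≤ b → φS a ≤ φS b := by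
    intro a b ha hab
    rw [hφS, hφS]
    apply Real.sqrt_le_sqrt
    have hap : 0 < a ^ (n - 2) := pow_pos (hρ₀pos.trans ha) _
    have hple : a ^ (n - 2) ≤ b ^ (n - 2) :=
      pow_le_pow_left₀ (hρ₀pos.trans ha).le hab _
    have := div_le_div_of_nonneg_left h2m.le hap hple
    linarith
  have hφSmeas : Measurable φS := by
    have : φS = fun ρ => Real.sqrt (1 - 2 * m₀ / ρ ^ (n - 2)) := funext hφS
    rw [this]
    exact (measurable_const.sub (measurable_const.div (measurable_id.pow_const _))).sqrt
  have hIccm : MeasurableSet (Set.Icc ρδ A) := measurableSet_Icc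
  have hGmeas : Measurable (fun ρ => ENNReal.ofReal (φ ρ)⁻¹) :=
    ENNReal.measurable_ofReal.comp hφm.inv
  -- positivity of Dt
  have hDtpos : 0 < Dt := by
    by_contra h
    push_neg at h
    have h0 : ENNReal.ofReal Dt = 0 := ENNReal.ofReal_eq_zero.mpr h
    have hz := (lintegral_eq_zero_iff hGmeas).mp (hdepth.trans h0)
    rw [Filter.EventuallyEq, ae_restrict_iff' hIccm] at hz
    have hnull := ae_iff.mp hz
    have hsub : Set.Icc ρδ A ⊆
        {x | ¬ (x ∈ Set.Icc ρδ A → ENNReal.ofReal (φ x)⁻¹ = (0:ℝ≥0∞))} := by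
      intro x hx
      simp only [Set.mem_setOf_eq]
      intro hcontra
      have h1 := hcontra hx
      have hpos : 0 < ENNReal.ofReal (φ x)⁻¹ :=
        ENNReal.ofReal_pos.mpr (inv_pos.mpr (hφpos x hx))
      rw [h1] at hpos
      exact lt_irrefl _ hpos
    have : volume (Set.Icc ρδ A) = 0 := measure_mono_null hsub hnull
    rw [Real.volume_Icc] at this
    rw [ENNReal.ofReal_eq_zero] at this
    linarith
  -- integrability of φS⁻¹ on (ρ₀, A]
  have hint : IntegrableOn (fun ρ => (φS ρ)⁻¹) (Set.Ioc ρ₀ A) volume := by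
    by_contra h
    rw [hDt, integral_undef h] at hDtpos
    exact lt_irrefl _ hDtpos
  have hinvnn : ∀ ρ : ℝ, 0 ≤ (φS ρ)⁻¹ := fun ρ => inv_nonneg.mpr (hφSnn ρ)
  have hρ₀ρδ : ρ₀ < ρδ := by linarith
  set I := ∫ ρ in Set.Ioc ρ₀ (ρ₀ + c), (φS ρ)⁻¹ with hI
  set J := ∫ ρ in Set.Ioc ρδ A, (φS ρ)⁻¹ with hJ
  have hsplit : Dt = (∫ ρ in Set.Ioc ρ₀ ρδ, (φS ρ)⁻¹) + J := by
    rw [hDt, ← Set.Ioc_union_Ioc_eq_Ioc hρ₀ρδ.le hρδ2.le,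
      setIntegral_union (Set.Ioc_disjoint_Ioc_of_le le_rfl) measurableSet_Ioc
        (hint.mono_set (Set.Ioc_subset_Ioc_right hρδ2.le))
        (hint.mono_set (Set.Ioc_subset_Ioc_left hρ₀ρδ.le))]
  have hIle : I ≤ Dt - J := by
    have h1 : I ≤ ∫ ρ in Set.Ioc ρ₀ ρδ, (φS ρ)⁻¹ :=
      setIntegral_mono_set (hint.mono_set (Set.Ioc_subset_Ioc_right hρδ2.le))
        (ae_of_all _ fun ρ => hinvnn ρ)
        ((Set.Ioc_subset_Ioc_right hρδ1).eventuallyLE)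
    linarith [hsplit]
  have hInn : 0 ≤ I := setIntegral_nonneg measurableSet_Ioc fun ρ _ => hinvnn ρ
  have hJnn : 0 ≤ J := setIntegral_nonneg measurableSet_Ioc fun ρ _ => hinvnn ρ
  have hintIcc : IntegrableOn (fun ρ => (φS ρ)⁻¹) (Set.Icc ρδ A) volume :=
    hint.mono_set fun x hx => ⟨hρ₀ρδ.trans_le hx.1, hx.2⟩
  -- ENNReal functions
  set F : ℝ → ℝ≥0∞ := fun ρ => ENNReal.ofReal |φ ρ - φS ρ| with hF
  set G : ℝ → ℝ≥0∞ := fun ρ => ENNReal.ofReal (φ ρ)⁻¹ with hG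
  set H : ℝ → ℝ≥0∞ := fun ρ => ENNReal.ofReal (φS ρ)⁻¹ with hH
  have hFmeas : Measurable F := ENNReal.measurable_ofReal.comp (hφm.sub hφSmeas).abs
  have hHmeas : Measurable H := ENNReal.measurable_ofReal.comp hφSmeas.inv
  have hHlint : ∫⁻ ρ in Set.Icc ρδ A, H ρ = ENNReal.ofReal J := by
    rw [hJ, ← integral_Icc_eq_integral_Ioc,
      ofReal_integral_eq_lintegral_ofReal hintIcc (ae_of_all _ fun ρ => hinvnn ρ)]
  have hdepth' : ∫⁻ ρ in Set.Icc ρδ A, G ρ = ENNReal.ofReal Dt := hdepth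
  -- lower bound ∫ (G - H)
  have hsub_le : ENNReal.ofReal Dt - ENNReal.ofReal J
      ≤ ∫⁻ ρ in Set.Icc ρδ A, (G ρ - H ρ) := by
    rw [← hdepth', ← hHlint]
    refine tsub_le_iff_right.mpr ?_
    rw [← lintegral_add_right _ hHmeas]
    exact lintegral_mono fun ρ => le_tsub_add
  have hφScpos : 0 < φS (ρ₀ + c) := hφSpos _ (by linarith)
  -- pointwise bound for step D
  have hptD : ∀ ρ ∈ Set.Icc ρδ A,
      ENNReal.ofReal (φS (ρ₀ + c)) * (G ρ - H ρ) ≤ F ρ * G ρ := by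
    intro ρ hρ
    have hφρ : 0 < φ ρ := hφpos ρ hρ
    have hρgt : ρ₀ < ρ := hρ₀ρδ.trans_le hρ.1
    have hφSρ : 0 < φS ρ := hφSpos ρ hρgt
    have hmono : φS (ρ₀ + c) ≤ φS ρ := hφSmono _ _ (by linarith) (by linarith [hρ.1])
    calc ENNReal.ofReal (φS (ρ₀ + c)) * (G ρ - H ρ)
        = ENNReal.ofReal (φS (ρ₀ + c)) * ENNReal.ofReal ((φ ρ)⁻¹ - (φS ρ)⁻¹) := by
          rw [hG, hH]; rw [ENNReal.ofReal_sub _ (inv_nonneg.mpr hφSρ.le)]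
      _ = ENNReal.ofReal (φS (ρ₀ + c) * ((φ ρ)⁻¹ - (φS ρ)⁻¹)) :=
          (ENNReal.ofReal_mul hφScpos.le).symm
      _ ≤ ENNReal.ofReal (|φ ρ - φS ρ| * (φ ρ)⁻¹) := by
          apply ENNReal.ofReal_le_ofReal
          have heq : (φ ρ)⁻¹ - (φS ρ)⁻¹ = (φS ρ - φ ρ) * (φ ρ)⁻¹ * (φS ρ)⁻¹ := by
            field_simp
          have habs : (φ ρ)⁻¹ - (φS ρ)⁻¹ ≤ |φ ρ - φS ρ| * (φ ρ)⁻¹ * (φS ρ)⁻¹ := by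
            rw [heq]
            have h1 : φS ρ - φ ρ ≤ |φ ρ - φS ρ| := by
              rw [abs_sub_comm]; exact le_abs_self _
            exact mul_le_mul_of_nonneg_right
              (mul_le_mul_of_nonneg_right h1 (inv_nonneg.mpr hφρ.le))
              (inv_nonneg.mpr hφSρ.le)
          calc φS (ρ₀ + c) * ((φ ρ)⁻¹ - (φS ρ)⁻¹)
              ≤ φS (ρ₀ + c) * (|φ ρ - φS ρ| * (φ ρ)⁻¹ * (φS ρ)⁻¹) :=
                mul_le_mul_of_nonneg_left habs hφScpos.le
            _ ≤ φS ρ * (|φ ρ - φS ρ| * (φ ρ)⁻¹ * (φS ρ)⁻¹) :=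
                mul_le_mul_of_nonneg_right hmono
                  (mul_nonneg (mul_nonneg (abs_nonneg _) (inv_nonneg.mpr hφρ.le))
                    (inv_nonneg.mpr hφSρ.le))
            _ = |φ ρ - φS ρ| * (φ ρ)⁻¹ := by
                field_simp
      _ = F ρ * G ρ := by rw [hF, hG, ENNReal.ofReal_mul (abs_nonneg _)]
  have hDJ : ENNReal.ofReal Dt - ENNReal.ofReal J = ENNReal.ofReal (Dt - J) :=
    (ENNReal.ofReal_sub _ hJnn).symm
  -- step D: lower bound on ∫ F G
  have hL1 : ENNReal.ofReal (φS (ρ₀ + c)) * ENNReal.ofReal I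
      ≤ ∫⁻ ρ in Set.Icc ρδ A, F ρ * G ρ := by
    calc ENNReal.ofReal (φS (ρ₀ + c)) * ENNReal.ofReal I
        ≤ ENNReal.ofReal (φS (ρ₀ + c)) * ENNReal.ofReal (Dt - J) :=
          mul_le_mul_right (ENNReal.ofReal_le_ofReal hIle) _
      _ = ENNReal.ofReal (φS (ρ₀ + c)) * (ENNReal.ofReal Dt - ENNReal.ofReal J) := by
          rw [hDJ]
      _ ≤ ENNReal.ofReal (φS (ρ₀ + c)) * ∫⁻ ρ in Set.Icc ρδ A, (G ρ - H ρ) :=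
          mul_le_mul_right hsub_le _
      _ = ∫⁻ ρ in Set.Icc ρδ A, ENNReal.ofReal (φS (ρ₀ + c)) * (G ρ - H ρ) :=
          (lintegral_const_mul _ (hGmeas.sub hHmeas)).symm
      _ ≤ ∫⁻ ρ in Set.Icc ρδ A, F ρ * G ρ := setLIntegral_mono' hIccm hptD
  -- Cauchy–Schwarz
  have hCS : (∫⁻ ρ in Set.Icc ρδ A, F ρ * G ρ) ^ 2
      ≤ (∫⁻ ρ in Set.Icc ρδ A, F ρ ^ 2 * G ρ) * ENNReal.ofReal Dt := by
    have h22 : Real.HolderConjugate 2 2 := ⟨by norm_num, by norm_num, by norm_num⟩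
    have hfm : Measurable (fun ρ => F ρ * (G ρ) ^ (1/2 : ℝ)) :=
      hFmeas.mul (hGmeas.pow measurable_const)
    have hgm : Measurable (fun ρ => (G ρ) ^ (1/2 : ℝ)) := hGmeas.pow measurable_const
    have key := ENNReal.lintegral_mul_le_Lp_mul_Lq
      (volume.restrict (Set.Icc ρδ A)) h22 hfm.aemeasurable hgm.aemeasurable
    have e1 : ∀ ρ : ℝ, ((fun ρ => F ρ * (G ρ) ^ (1/2 : ℝ)) * fun ρ => (G ρ) ^ (1/2 : ℝ)) ρ
        = F ρ * G ρ := by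
      intro ρ
      simp only [Pi.mul_apply]
      rw [mul_assoc, ← ENNReal.rpow_add_of_nonneg _ _ (by norm_num) (by norm_num)]
      norm_num
    have e2 : ∀ ρ : ℝ, (F ρ * (G ρ) ^ (1/2 : ℝ)) ^ (2:ℝ) = F ρ ^ 2 * G ρ := by
      intro ρ
      rw [ENNReal.mul_rpow_of_nonneg _ _ (by norm_num : (0:ℝ) ≤ 2),
        ← ENNReal.rpow_mul]
      norm_num
    have e3 : ∀ ρ : ℝ, ((G ρ) ^ (1/2 : ℝ)) ^ (2:ℝ) = G ρ := by
      intro ρ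
      rw [← ENNReal.rpow_mul]
      norm_num
    simp only [e1, e2, e3] at key
    have hsq := pow_le_pow_left₀ zero_le key 2
    refine hsq.trans (le_of_eq ?_)
    rw [mul_pow]
    have e4 : ∀ x : ℝ≥0∞, (x ^ (1/2 : ℝ)) ^ (2:ℕ) = x := by
      intro x
      rw [← ENNReal.rpow_natCast (x ^ (1/2 : ℝ)) 2, ← ENNReal.rpow_mul]
      norm_num
    rw [e4, e4, hdepth']
  -- steps A and B: bound the target from below
  have hsqmeas : Measurable (fun ρ => ENNReal.ofReal (|φ ρ - φS ρ| ^ 2)) :=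
    ENNReal.measurable_ofReal.comp ((hφm.sub hφSmeas).abs.pow_const 2)
  have hdmeas : Measurable (fun ρ => ENNReal.ofReal (ωn * ρ ^ (n - 1) * (φ ρ)⁻¹)) :=
    ENNReal.measurable_ofReal.comp
      ((measurable_const.mul (measurable_id.pow_const _)).mul hφm.inv)
  have hTB : ENNReal.ofReal (ωn * ρ₀ ^ (n - 1)) * ∫⁻ ρ in Set.Icc ρδ A, F ρ ^ 2 * G ρ
      ≤ ∫⁻ ρ, ENNReal.ofReal (|φ ρ - φS ρ| ^ 2) ∂μ := by
    rw [hμ, lintegral_withDensity_eq_lintegral_mul _ hdmeas hsqmeas,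
      ← lintegral_const_mul _ (f := fun ρ => F ρ ^ 2 * G ρ) ((hFmeas.pow_const 2).mul hGmeas)]
    apply setLIntegral_mono' hIccm
    intro ρ hρ
    simp only [Pi.mul_apply]
    have hφρ : 0 < φ ρ := hφpos ρ hρ
    have hρge : ρ₀ ≤ ρ := (hρ₀ρδ.trans_le hρ.1).le
    have hFG : F ρ ^ 2 * G ρ = ENNReal.ofReal (|φ ρ - φS ρ| ^ 2 * (φ ρ)⁻¹) := by
      rw [hF, hG, ENNReal.ofReal_mul (by positivity), ENNReal.ofReal_pow (abs_nonneg _)]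
    have hρnn : 0 ≤ ρ := hρ₀pos.le.trans hρge
    rw [hFG, ← ENNReal.ofReal_mul (mul_nonneg hω.le (pow_nonneg hρ₀pos.le _)),
      ← ENNReal.ofReal_mul
        (mul_nonneg (mul_nonneg hω.le (pow_nonneg hρnn _)) (inv_nonneg.mpr hφρ.le))]
    apply ENNReal.ofReal_le_ofReal
    have hple : ρ₀ ^ (n - 1) ≤ ρ ^ (n - 1) := pow_le_pow_left₀ hρ₀pos.le hρge _
    nlinarith [mul_le_mul_of_nonneg_left hple
      (mul_nonneg hω.le (mul_nonneg (sq_nonneg |φ ρ - φS ρ|) (inv_nonneg.mpr hφρ.le)))]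
  -- combine Cauchy–Schwarz with step D
  have hX : ENNReal.ofReal ((φS (ρ₀ + c) * I) ^ 2)
      ≤ (∫⁻ ρ in Set.Icc ρδ A, F ρ ^ 2 * G ρ) * ENNReal.ofReal Dt := by
    calc ENNReal.ofReal ((φS (ρ₀ + c) * I) ^ 2)
        = (ENNReal.ofReal (φS (ρ₀ + c) * I)) ^ 2 := by
          rw [ENNReal.ofReal_pow (mul_nonneg hφScpos.le hInn)]
      _ = (ENNReal.ofReal (φS (ρ₀ + c)) * ENNReal.ofReal I) ^ 2 := by
          rw [ENNReal.ofReal_mul hφScpos.le]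
      _ ≤ (∫⁻ ρ in Set.Icc ρδ A, F ρ * G ρ) ^ 2 := pow_le_pow_left₀ zero_le hL1 2
      _ ≤ _ := hCS
  have hSge : ENNReal.ofReal ((φS (ρ₀ + c) * I) ^ 2 / Dt)
      ≤ ∫⁻ ρ in Set.Icc ρδ A, F ρ ^ 2 * G ρ := by
    rw [ENNReal.ofReal_div_of_pos hDtpos]
    exact (ENNReal.div_le_iff_le_mul
      (Or.inl (ENNReal.ofReal_pos.mpr hDtpos).ne')
      (Or.inl ENNReal.ofReal_ne_top)).mpr hX
  -- final real inequality
  have hreal : ωn * (φS (ρ₀ + c)) ^ 2 * ρ₀ ^ (2 * (n - 1)) / (A ^ (n - 1) * Dt) * I ^ 2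
      ≤ ωn * ρ₀ ^ (n - 1) * ((φS (ρ₀ + c) * I) ^ 2 / Dt) := by
    have hAD : 0 < A ^ (n - 1) * Dt := mul_pos (pow_pos hApos _) hDtpos
    rw [div_mul_eq_mul_div, div_le_iff₀ hAD]
    have h2 : ωn * ρ₀ ^ (n - 1) * ((φS (ρ₀ + c) * I) ^ 2 / Dt) * (A ^ (n - 1) * Dt)
        = ωn * ρ₀ ^ (n - 1) * (φS (ρ₀ + c)) ^ 2 * I ^ 2 * A ^ (n - 1) := by
      field_simp
    rw [h2]
    have hkey : ρ₀ ^ (2 * (n - 1)) ≤ ρ₀ ^ (n - 1) * A ^ (n - 1) := by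
      rw [two_mul, pow_add]
      exact mul_le_mul_of_nonneg_left (pow_le_pow_left₀ hρ₀pos.le hA.le _)
        (pow_nonneg hρ₀pos.le _)
    nlinarith [mul_le_mul_of_nonneg_left hkey
      (mul_nonneg (mul_nonneg hω.le (sq_nonneg (φS (ρ₀ + c)))) (sq_nonneg I))]
  calc ENNReal.ofReal (ωn * (φS (ρ₀ + c)) ^ 2 * ρ₀ ^ (2 * (n - 1)) / (A ^ (n - 1) * Dt)
        * I ^ 2)
      ≤ ENNReal.ofReal (ωn * ρ₀ ^ (n - 1) * ((φS (ρ₀ + c) * I) ^ 2 / Dt)) :=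
        ENNReal.ofReal_le_ofReal hreal
    _ = ENNReal.ofReal (ωn * ρ₀ ^ (n - 1)) * ENNReal.ofReal ((φS (ρ₀ + c) * I) ^ 2 / Dt) :=
        ENNReal.ofReal_mul (mul_nonneg hω.le (pow_nonneg hρ₀pos.le _))
    _ ≤ ENNReal.ofReal (ωn * ρ₀ ^ (n - 1)) * ∫⁻ ρ in Set.Icc ρδ A, F ρ ^ 2 * G ρ :=
        mul_le_mul_right hSge _
    _ ≤ _ := hTB
end

section
/- Let n ≥ 3 be an integer and let m₀, ε₁, ε₂, ε₃, δ > 0. Set ρ₀ = (2m₀)^{1/(n−2)} and ξ(ε₁) = (ρ₀+ε₁)^{n−2} − 2m₀. Suppose δ·m₀ + ε₂ < ξ(ε₁)·(ε₃² + 2ε₃)/(2((1+ε₃)² + ε₃² + 2ε₃)). Then for every ρ ≥ ρ₀ + ε₁ and all reals P, Q with 0 ≤ P ≤ δ·m₀ and |Q| ≤ ε₂, one has 1 − 2(m₀+P+Q+ε₂)/ρ^{n−2} > 0 and (1 − 2m₀/ρ^{n−2})^{−1} ≤ (1+ε₃)²·(1 − 2(m₀+P+Q)/ρ^{n−2})^{−1}.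 -/
/-- Reverse metric comparison `g_S ≤ (1+ε₃)² ḡ` on the good region,
expressed as an inequality between the radial metric coefficients. -/
theorem metric_comparison_schwarzschild_le_jang
    (n : ℕ) (hn : 3 ≤ n) (m₀ ε₁ ε₂ ε₃ δ : ℝ)
    (hm₀ : 0 < m₀) (hε₁ : 0 < ε₁) (hε₂ : 0 < ε₂) (hε₃ : 0 < ε₃) (hδ : 0 < δ)
    (ρ₀ : ℝ) (hρ₀ : ρ₀ = (2 * m₀) ^ (((n : ℝ) - 2)⁻¹))
    (ξ : ℝ) (hξ : ξ = (ρ₀ + ε₁) ^ (n - 2) - 2 * m₀)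
    (hsmall : δ * m₀ + ε₂ <
        ξ * (ε₃ ^ 2 + 2 * ε₃) / (2 * ((1 + ε₃) ^ 2 + ε₃ ^ 2 + 2 * ε₃))) :
    ∀ ρ : ℝ, ρ₀ + ε₁ ≤ ρ → ∀ P Q : ℝ, 0 ≤ P → P ≤ δ * m₀ → |Q| ≤ ε₂ →
      0 < 1 - 2 * (m₀ + P + Q + ε₂) / ρ ^ (n - 2) ∧
      (1 - 2 * m₀ / ρ ^ (n - 2))⁻¹
        ≤ (1 + ε₃) ^ 2 * (1 - 2 * (m₀ + P + Q) / ρ ^ (n - 2))⁻¹ := by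
  intro ρ hρ P Q hP0 hP hQ
  obtain ⟨hQ1, hQ2⟩ := abs_le.mp hQ
  have h2m : (0:ℝ) < 2 * m₀ := by linarith
  have hn2 : ((n - 2 : ℕ) : ℝ) = (n : ℝ) - 2 := by
    have : (2:ℕ) ≤ n := by omega
    push_cast [Nat.cast_sub this]
    ring
  have hnR : (3:ℝ) ≤ (n:ℝ) := by exact_mod_cast hn
  have hρ₀pos : 0 < ρ₀ := by rw [hρ₀]; exact Real.rpow_pos_of_pos h2m _
  have hρ₀pow : ρ₀ ^ (n - 2) = 2 * m₀ := by
    rw [hρ₀, ← Real.rpow_natCast ((2*m₀) ^ (((n:ℝ) - 2)⁻¹)) (n-2),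
      ← Real.rpow_mul h2m.le, hn2, inv_mul_cancel₀ (by linarith), Real.rpow_one]
  have hρpos : 0 < ρ := lt_of_lt_of_le (by linarith) hρ
  have hrle : (ρ₀ + ε₁) ^ (n - 2) ≤ ρ ^ (n - 2) :=
    pow_le_pow_left₀ (by linarith) hρ _
  have hr : 2 * m₀ + ξ ≤ ρ ^ (n - 2) := by rw [hξ] at *; linarith
  have hrpos : 0 < ρ ^ (n - 2) := pow_pos hρpos _
  have hξpos : 0 < ξ := by
    have : ρ₀ ^ (n - 2) < (ρ₀ + ε₁) ^ (n - 2) :=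
      pow_lt_pow_left₀ (by linarith) hρ₀pos.le (by omega)
    rw [hρ₀pow] at this
    rw [hξ]; linarith
  have hD : (0:ℝ) < 2 * ((1 + ε₃) ^ 2 + ε₃ ^ 2 + 2 * ε₃) := by positivity
  have key : (δ * m₀ + ε₂) * (2 * ((1 + ε₃) ^ 2 + ε₃ ^ 2 + 2 * ε₃))
      < ξ * (ε₃ ^ 2 + 2 * ε₃) := (lt_div_iff₀ hD).mp hsmall
  have hc : (0:ℝ) < ε₃ ^ 2 + 2 * ε₃ := by positivity
  -- 4(δm₀+ε₂) < ξ
  have h4 : 4 * (δ * m₀ + ε₂) < ξ := by nlinarith [mul_pos hm₀ hδ]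
  -- positivity part
  have hpos : 0 < 1 - 2 * (m₀ + P + Q + ε₂) / ρ ^ (n - 2) := by
    have h1 : 2 * (m₀ + P + Q + ε₂) < ρ ^ (n - 2) := by linarith
    have := div_lt_one hrpos |>.mpr h1
    linarith
  refine ⟨hpos, ?_⟩
  -- 2ε₂ ≤ ξ(ε₃²+2ε₃)
  have h2e : 2 * ε₂ < ξ * (ε₃ ^ 2 + 2 * ε₃) := by
    nlinarith [mul_pos (mul_pos hδ hm₀) hc, mul_pos hε₂ (show (0:ℝ) < (1+ε₃)^2 by positivity), mul_pos hε₂ hc, mul_pos (mul_pos hδ hm₀) (show (0:ℝ) < (1+ε₃)^2 by positivity)]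
  set r := ρ ^ (n - 2) with hrdef
  clear_value r
  have hApos : 0 < 1 - 2 * m₀ / r := by
    have h1 : 2 * m₀ < r := by linarith
    have := div_lt_one hrpos |>.mpr h1
    linarith
  have hBpos : 0 < 1 - 2 * (m₀ + P + Q) / r := by
    have h1 : 2 * (m₀ + P + Q) < r := by linarith
    have := div_lt_one hrpos |>.mpr h1
    linarith
  have key2 : 1 - 2 * (m₀ + P + Q) / r ≤ (1 + ε₃) ^ 2 * (1 - 2 * m₀ / r) := by
    have hnum : r - 2 * (m₀ + P + Q) ≤ (1 + ε₃) ^ 2 * (r - 2 * m₀) := by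
      have hprod : 0 ≤ (ε₃ ^ 2 + 2 * ε₃) * (r - 2 * m₀ - ξ) :=
        mul_nonneg hc.le (by linarith)
      have e1 : (1 + ε₃) ^ 2 * (r - 2 * m₀)
          = (r - 2 * m₀) + (ε₃ ^ 2 + 2 * ε₃) * (r - 2 * m₀ - ξ)
            + ξ * (ε₃ ^ 2 + 2 * ε₃) := by ring
      linarith [hprod, h2e, e1]
    calc 1 - 2 * (m₀ + P + Q) / r = (r - 2 * (m₀ + P + Q)) / r := by
          field_simp
      _ ≤ ((1 + ε₃) ^ 2 * (r - 2 * m₀)) / r := by gcongr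
      _ = (1 + ε₃) ^ 2 * (1 - 2 * m₀ / r) := by field_simp
  have hinv : ((1 + ε₃) ^ 2 * (1 - 2 * m₀ / r))⁻¹ ≤ (1 - 2 * (m₀ + P + Q) / r)⁻¹ :=
    inv_anti₀ hBpos key2
  calc (1 - 2 * m₀ / r)⁻¹
      = (1 + ε₃) ^ 2 * ((1 + ε₃) ^ 2 * (1 - 2 * m₀ / r))⁻¹ := by
        rw [mul_inv, ← mul_assoc, mul_inv_cancel₀ (by positivity), one_mul]
    _ ≤ (1 + ε₃) ^ 2 * (1 - 2 * (m₀ + P + Q) / r)⁻¹ :=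
        mul_le_mul_of_nonneg_left hinv (by positivity)
end

section
/- Let n ≥ 3 be an integer and let m₀, ε₁, ε₂, ε₃, δ > 0. Set ρ₀ = (2m₀)^{1/(n−2)} and ξ(ε₁) = (ρ₀+ε₁)^{n−2} − 2m₀. Suppose δ·m₀ + ε₂ < ξ(ε₁)·(ε₃² + 2ε₃)/(4((1+ε₃)² + ε₃² + 2ε₃)). Then for every ρ ≥ ρ₀ + ε₁ and all reals P, Q with 0 ≤ P ≤ δ·m₀ and |Q| ≤ ε₂, setting φ = √(1 − 2(m₀+P+Q)/ρ^{n−2}) and φ_S = √(1 − 2m₀/ρ^{n−2}), both quantities under the square roots are positive and (1+ε₃)^{−1}·φ_S ≤ φ ≤ (1+ε₃)·φ_S. -/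
/-- Two-sided comparison of the Jang warping factor `φ` with the
Schwarzschild warping factor `φ_S` on the good region. -/
theorem warping_factor_two_sided_bound
    (n : ℕ) (hn : 3 ≤ n) (m₀ ε₁ ε₂ ε₃ δ : ℝ)
    (hm₀ : 0 < m₀) (hε₁ : 0 < ε₁) (hε₂ : 0 < ε₂) (hε₃ : 0 < ε₃) (hδ : 0 < δ)
    (ρ₀ : ℝ) (hρ₀ : ρ₀ = (2 * m₀) ^ (((n : ℝ) - 2)⁻¹))
    (ξ : ℝ) (hξ : ξ = (ρ₀ + ε₁) ^ (n - 2) - 2 * m₀)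
    (hsmall : δ * m₀ + ε₂ <
        ξ * (ε₃ ^ 2 + 2 * ε₃) / (4 * ((1 + ε₃) ^ 2 + ε₃ ^ 2 + 2 * ε₃))) :
    ∀ ρ : ℝ, ρ₀ + ε₁ ≤ ρ → ∀ P Q : ℝ, 0 ≤ P → P ≤ δ * m₀ → |Q| ≤ ε₂ →
      0 < 1 - 2 * (m₀ + P + Q) / ρ ^ (n - 2) ∧
      0 < 1 - 2 * m₀ / ρ ^ (n - 2) ∧
      (1 + ε₃)⁻¹ * Real.sqrt (1 - 2 * m₀ / ρ ^ (n - 2))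
        ≤ Real.sqrt (1 - 2 * (m₀ + P + Q) / ρ ^ (n - 2)) ∧
      Real.sqrt (1 - 2 * (m₀ + P + Q) / ρ ^ (n - 2))
        ≤ (1 + ε₃) * Real.sqrt (1 - 2 * m₀ / ρ ^ (n - 2)) := by
  intro ρ hρ P Q hP hPδ hQ
  have h2n : 2 ≤ n := by omega
  have hkc : ((n - 2 : ℕ) : ℝ) = (n : ℝ) - 2 := by
    push_cast [h2n]; ring
  have hρ₀pos : 0 < ρ₀ := by
    rw [hρ₀]; exact Real.rpow_pos_of_pos (by linarith) _
  have hpow : ρ₀ ^ (n - 2) = 2 * m₀ := by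
    rw [hρ₀, ← hkc]
    exact Real.rpow_inv_natCast_pow (by linarith) (by omega)
  have hξpos : 0 < ξ := by
    rw [hξ, ← hpow]
    have := pow_lt_pow_left₀ (show ρ₀ < ρ₀ + ε₁ by linarith) hρ₀pos.le
      (show n - 2 ≠ 0 by omega)
    linarith
  have hρpos : 0 < ρ := by linarith
  have hA : 2 * m₀ + ξ ≤ ρ ^ (n - 2) := by
    have hple := pow_le_pow_left₀ (by linarith : (0:ℝ) ≤ ρ₀ + ε₁) hρ (n - 2)
    rw [hξ]; linarith
  set A := ρ ^ (n - 2) with hAdef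
  have hApos : 0 < A := by positivity
  obtain ⟨hQ1, hQ2⟩ := abs_le.mp hQ
  have hc : (0:ℝ) < ε₃ ^ 2 + 2 * ε₃ := by positivity
  have hη'pos : (0:ℝ) < δ * m₀ + ε₂ := by positivity
  have hkey : 4 * ((1 + ε₃) ^ 2 + ε₃ ^ 2 + 2 * ε₃) * (δ * m₀ + ε₂) <
      ξ * (ε₃ ^ 2 + 2 * ε₃) := by
    have hd : (0:ℝ) < 4 * ((1 + ε₃) ^ 2 + ε₃ ^ 2 + 2 * ε₃) := by positivity
    have := (lt_div_iff₀ hd).mp hsmall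
    linarith
  have hξ2 : 2 * (δ * m₀ + ε₂) < ξ := by
    nlinarith [hkey, hc, hη'pos, mul_nonneg hc.le hη'pos.le]
  have hTpos : 0 < 1 - 2 * (m₀ + P + Q) / A := by
    rw [sub_pos, div_lt_one hApos]; linarith
  have hSpos : 0 < 1 - 2 * m₀ / A := by
    rw [sub_pos, div_lt_one hApos]; linarith
  have p1 : 0 ≤ (ε₃ ^ 2 + 2 * ε₃) * (A - (2 * m₀ + ξ)) :=
    mul_nonneg hc.le (by linarith)
  have p2 : 0 ≤ (2 * (1 + ε₃) ^ 2) * ((δ * m₀ + ε₂) - (P + Q)) :=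
    mul_nonneg (by positivity) (by linarith)
  have p3 : 0 ≤ (2 + 6 * (ε₃ ^ 2 + 2 * ε₃)) * (δ * m₀ + ε₂) :=
    mul_nonneg (by positivity) (by positivity)
  have q2 : 0 ≤ 2 * ((P + Q) + (δ * m₀ + ε₂)) := by nlinarith
  have key1 : A - 2 * m₀ ≤ (1 + ε₃) ^ 2 * (A - 2 * (m₀ + P + Q)) := by
    linarith [p1, p2, p3, hkey]
  have p4 : 0 ≤ (2 + 8 * (ε₃ ^ 2 + 2 * ε₃)) * (δ * m₀ + ε₂) :=
    mul_nonneg (by positivity) (by positivity)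
  have key2 : A - 2 * (m₀ + P + Q) ≤ (1 + ε₃) ^ 2 * (A - 2 * m₀) := by
    linarith [p1, q2, p4, hkey]
  have hcmp1 : 1 - 2 * m₀ / A ≤ (1 + ε₃) ^ 2 * (1 - 2 * (m₀ + P + Q) / A) := by
    have h1 : 1 - 2 * m₀ / A = (A - 2 * m₀) / A := by field_simp
    have h2 : (1 + ε₃) ^ 2 * (1 - 2 * (m₀ + P + Q) / A)
        = ((1 + ε₃) ^ 2 * (A - 2 * (m₀ + P + Q))) / A := by
      field_simp
    rw [h1, h2]
    exact (div_le_div_iff_of_pos_right hApos).mpr key1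
  have hcmp2 : 1 - 2 * (m₀ + P + Q) / A ≤ (1 + ε₃) ^ 2 * (1 - 2 * m₀ / A) := by
    have h1 : 1 - 2 * (m₀ + P + Q) / A = (A - 2 * (m₀ + P + Q)) / A := by
      field_simp
    have h2 : (1 + ε₃) ^ 2 * (1 - 2 * m₀ / A)
        = ((1 + ε₃) ^ 2 * (A - 2 * m₀)) / A := by
      field_simp
    rw [h1, h2]
    exact (div_le_div_iff_of_pos_right hApos).mpr key2
  have h1ε : (0:ℝ) < 1 + ε₃ := by linarith
  have hs1 : Real.sqrt (1 - 2 * m₀ / A)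
      ≤ (1 + ε₃) * Real.sqrt (1 - 2 * (m₀ + P + Q) / A) := by
    calc Real.sqrt (1 - 2 * m₀ / A)
        ≤ Real.sqrt ((1 + ε₃) ^ 2 * (1 - 2 * (m₀ + P + Q) / A)) :=
          Real.sqrt_le_sqrt hcmp1
      _ = (1 + ε₃) * Real.sqrt (1 - 2 * (m₀ + P + Q) / A) := by
          rw [Real.sqrt_mul (by positivity), Real.sqrt_sq h1ε.le]
  have hs2 : Real.sqrt (1 - 2 * (m₀ + P + Q) / A)
      ≤ (1 + ε₃) * Real.sqrt (1 - 2 * m₀ / A) := by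
    calc Real.sqrt (1 - 2 * (m₀ + P + Q) / A)
        ≤ Real.sqrt ((1 + ε₃) ^ 2 * (1 - 2 * m₀ / A)) :=
          Real.sqrt_le_sqrt hcmp2
      _ = (1 + ε₃) * Real.sqrt (1 - 2 * m₀ / A) := by
          rw [Real.sqrt_mul (by positivity), Real.sqrt_sq h1ε.le]
  refine ⟨hTpos, hSpos, ?_, hs2⟩
  rw [inv_mul_le_iff₀ h1ε]
  exact hs1
end

section
/- Let n ≥ 3 be an integer, let δ, m₀, C, ε₁, ε₂ > 0, ρ₀ = (2m₀)^{1/(n−2)}, A > ρ₀ + ε₁, and ξ(ε₁) = (ρ₀+ε₁)^{n−2} − 2m₀. Let φ, Q : [ρ₀+ε₁, A] → ℝ be measurable with 0 < φ(ρ) ≤ A·C, let μ be the measure with density ω_{n−1}ρ^{n−1}φ(ρ)^{−1}, assume ∫ Q² dμ ≤ δ·ω_{n−1}·m₀·A^{2n−1}·C, and set B = {ρ : |Q(ρ)| > ε₂} and φ_S(ρ) = √(1 − 2m₀/ρ^{n−2}). Then ∫_B φ(ρ)^{−1} dρ ≤ δ·m₀·A^{2n−1}·C/((ρ₀+ε₁)^{n−1}·ε₂²)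 and ∫_B φ_S(ρ)^{−1} dρ ≤ δ·m₀·A^{2n}·C²/(√((ρ₀+ε₁)^n·ξ(ε₁))·ε₂²). -/
open MeasureTheory

/-- Bounds on the total radial lengths of the bad region
`B = {|Q| > ε₂}` in the Jang metric and in the Schwarzschild metric. -/
theorem bad_region_radial_length_bounds
    (n : ℕ) (hn : 3 ≤ n) (δ m₀ C ε₁ ε₂ ωn : ℝ)
    (hδ : 0 < δ) (hm₀ : 0 < m₀) (hC : 0 < C) (hε₁ : 0 < ε₁) (hε₂ : 0 < ε₂) (hω : 0 < ωn)
    (ρ₀ : ℝ) (hρ₀ : ρ₀ = (2 * m₀) ^ (((n : ℝ) - 2)⁻¹))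
    (A : ℝ) (hA : ρ₀ + ε₁ < A)
    (ξ : ℝ) (hξ : ξ = (ρ₀ + ε₁) ^ (n - 2) - 2 * m₀)
    (φ Q : ℝ → ℝ) (hφm : Measurable φ) (hQm : Measurable Q)
    (hφ : ∀ ρ ∈ Set.Icc (ρ₀ + ε₁) A, 0 < φ ρ ∧ φ ρ ≤ A * C)
    (μ : Measure ℝ)
    (hμ : μ = (volume.restrict (Set.Icc (ρ₀ + ε₁) A)).withDensity
        (fun ρ => ENNReal.ofReal (ωn * ρ ^ (n - 1) * (φ ρ)⁻¹)))
    (hQ2 : ∫⁻ ρ, ENNReal.ofReal ((Q ρ) ^ 2) ∂μ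
        ≤ ENNReal.ofReal (δ * ωn * m₀ * A ^ (2 * n - 1) * C))
    (B : Set ℝ) (hB : B = {ρ ∈ Set.Icc (ρ₀ + ε₁) A | ε₂ < |Q ρ|})
    (φS : ℝ → ℝ) (hφS : ∀ ρ, φS ρ = Real.sqrt (1 - 2 * m₀ / ρ ^ (n - 2))) :
    (∫⁻ ρ in B, ENNReal.ofReal ((φ ρ)⁻¹)
      ≤ ENNReal.ofReal (δ * m₀ * A ^ (2 * n - 1) * C / ((ρ₀ + ε₁) ^ (n - 1) * ε₂ ^ 2))) ∧
    (∫⁻ ρ in B, ENNReal.ofReal ((φS ρ)⁻¹)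
      ≤ ENNReal.ofReal (δ * m₀ * A ^ (2 * n) * C ^ 2 /
          (Real.sqrt ((ρ₀ + ε₁) ^ n * ξ) * ε₂ ^ 2))) := by
  have hn2 : 2 ≤ n := by omega
  have hρ₀pos : 0 < ρ₀ := by rw [hρ₀]; positivity
  set r : ℝ := ρ₀ + ε₁ with hr
  have hrpos : 0 < r := by positivity
  have hApos : 0 < A := hrpos.trans hA
  have hρ₀pow : ρ₀ ^ (n - 2) = 2 * m₀ := by
    have hcast : ((n - 2 : ℕ) : ℝ) = (n : ℝ) - 2 := by
      have := Nat.cast_sub (R := ℝ) hn2; simpa using this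
    have h2m : (0:ℝ) < 2 * m₀ := by positivity
    rw [hρ₀, ← Real.rpow_natCast _ (n - 2), hcast, ← Real.rpow_mul h2m.le,
      inv_mul_cancel₀ (by
        have : (2:ℝ) < n := by exact_mod_cast (by omega : 2 < n)
        linarith), Real.rpow_one]
  have hrρ₀ : ρ₀ < r := by simp [hr]; linarith
  have hξpos : 0 < ξ := by
    rw [hξ, ← hρ₀pow]
    have := pow_lt_pow_left₀ hrρ₀ hρ₀pos.le (by omega : n - 2 ≠ 0)
    linarith
  have hrpow : (0:ℝ) < r ^ (n - 2) := by positivity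
  -- B is measurable and contained in the interval
  have hBeq : B = Set.Icc r A ∩ {ρ | ε₂ < |Q ρ|} := by rw [hB]; rfl
  have hBmeas : MeasurableSet B := by
    rw [hBeq]
    exact measurableSet_Icc.inter (measurableSet_lt measurable_const hQm.abs)
  have hBsub : B ⊆ Set.Icc r A := by rw [hBeq]; exact Set.inter_subset_left
  -- lower bound for φS on the interval
  have hφSlow : ∀ ρ ∈ Set.Icc r A, Real.sqrt (ξ / r ^ (n - 2)) ≤ φS ρ := by
    intro ρ hρ
    have hρpos : 0 < ρ := hrpos.trans_le hρ.1
    have hpowle : r ^ (n - 2) ≤ ρ ^ (n - 2) := pow_le_pow_left₀ hrpos.le hρ.1 _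
    have hdivle : 2 * m₀ / ρ ^ (n - 2) ≤ 2 * m₀ / r ^ (n - 2) :=
      div_le_div_of_nonneg_left (by positivity) hrpow hpowle
    rw [hφS]
    apply Real.sqrt_le_sqrt
    rw [hξ, sub_div, div_self hrpow.ne']
    linarith
  have hsq : 0 < Real.sqrt (ξ / r ^ (n - 2)) := Real.sqrt_pos.2 (by positivity)
  -- the density
  set f : ℝ → ENNReal := fun ρ => ENNReal.ofReal (ωn * ρ ^ (n - 1) * (φ ρ)⁻¹) with hf
  have hfm : Measurable f :=
    ((measurable_const.mul ((measurable_id.pow_const (n - 1)))).mul hφm.inv).ennreal_ofReal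
  -- key inequality
  have key : ENNReal.ofReal (ωn * r ^ (n - 1) * ε₂ ^ 2) * ∫⁻ ρ in B, ENNReal.ofReal ((φ ρ)⁻¹)
      ≤ ENNReal.ofReal (δ * ωn * m₀ * A ^ (2 * n - 1) * C) := by
    rw [← lintegral_const_mul _ (f := fun ρ => ENNReal.ofReal ((φ ρ)⁻¹)) (hφm.inv.ennreal_ofReal)]
    have step1 : ∫⁻ ρ in B, ENNReal.ofReal (ωn * r ^ (n - 1) * ε₂ ^ 2) * ENNReal.ofReal ((φ ρ)⁻¹)
        ≤ ∫⁻ ρ in B, f ρ * ENNReal.ofReal ((Q ρ) ^ 2) := by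
      apply setLIntegral_mono (hfm.mul (hQm.pow_const 2).ennreal_ofReal)
      intro ρ hρ
      have hρI := hBsub hρ
      have hφρ := hφ ρ hρI
      have hQρ : ε₂ < |Q ρ| := by rw [hBeq] at hρ; exact hρ.2
      have hQ2ρ : ε₂ ^ 2 ≤ (Q ρ) ^ 2 := by
        have := sq_abs (Q ρ); nlinarith [abs_nonneg (Q ρ)]
      have hpow : r ^ (n - 1) ≤ ρ ^ (n - 1) := pow_le_pow_left₀ hrpos.le hρI.1 _
      have hρpos : (0:ℝ) < ρ := hrpos.trans_le hρI.1
      have hc1 : (0:ℝ) ≤ ωn * r ^ (n - 1) * ε₂ ^ 2 :=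
        mul_nonneg (mul_nonneg hω.le (pow_nonneg hrpos.le _)) (sq_nonneg ε₂)
      have hc2 : (0:ℝ) ≤ ωn * ρ ^ (n - 1) * (φ ρ)⁻¹ :=
        mul_nonneg (mul_nonneg hω.le (pow_nonneg hρpos.le _)) (inv_nonneg.2 hφρ.1.le)
      show _ ≤ f ρ * ENNReal.ofReal ((Q ρ) ^ 2)
      rw [hf, ← ENNReal.ofReal_mul hc1, ← ENNReal.ofReal_mul hc2]
      apply ENNReal.ofReal_le_ofReal
      have hinv : (0:ℝ) ≤ (φ ρ)⁻¹ := inv_nonneg.2 hφρ.1.le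
      calc ωn * r ^ (n - 1) * ε₂ ^ 2 * (φ ρ)⁻¹
          ≤ ωn * ρ ^ (n - 1) * (Q ρ) ^ 2 * (φ ρ)⁻¹ := by
            apply mul_le_mul_of_nonneg_right _ hinv
            have h1 : ωn * r ^ (n - 1) ≤ ωn * ρ ^ (n - 1) := by nlinarith
            calc ωn * r ^ (n - 1) * ε₂ ^ 2 ≤ ωn * ρ ^ (n - 1) * ε₂ ^ 2 :=
                  mul_le_mul_of_nonneg_right h1 (sq_nonneg ε₂)
              _ ≤ ωn * ρ ^ (n - 1) * (Q ρ) ^ 2 :=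
                  mul_le_mul_of_nonneg_left hQ2ρ
                    (mul_nonneg hω.le (pow_nonneg hρpos.le _))
        _ = ωn * ρ ^ (n - 1) * (φ ρ)⁻¹ * (Q ρ) ^ 2 := by ring
    refine step1.trans ?_
    have step2 : ∫⁻ ρ in B, f ρ * ENNReal.ofReal ((Q ρ) ^ 2)
        ≤ ∫⁻ ρ, ENNReal.ofReal ((Q ρ) ^ 2) ∂μ := by
      rw [hμ, lintegral_withDensity_eq_lintegral_mul _ hfm (hQm.pow_const 2).ennreal_ofReal]
      calc ∫⁻ ρ in B, f ρ * ENNReal.ofReal ((Q ρ) ^ 2)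
          = ∫⁻ ρ in B, (fun x => f x * ENNReal.ofReal ((Q x) ^ 2)) ρ
              ∂(volume.restrict (Set.Icc r A)) := by
            rw [Measure.restrict_restrict hBmeas, Set.inter_eq_self_of_subset_left hBsub]
        _ ≤ ∫⁻ ρ, (fun x => f x * ENNReal.ofReal ((Q x) ^ 2)) ρ
              ∂(volume.restrict (Set.Icc r A)) :=
            lintegral_mono' Measure.restrict_le_self le_rfl
        _ = _ := rfl
    exact step2.trans hQ2
  -- conclude part 1
  have hcpos : (0:ℝ) < ωn * r ^ (n - 1) * ε₂ ^ 2 := by positivity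
  have part1 : ∫⁻ ρ in B, ENNReal.ofReal ((φ ρ)⁻¹)
      ≤ ENNReal.ofReal (δ * m₀ * A ^ (2 * n - 1) * C / (r ^ (n - 1) * ε₂ ^ 2)) := by
    have hdiv : ∫⁻ ρ in B, ENNReal.ofReal ((φ ρ)⁻¹)
        ≤ ENNReal.ofReal (δ * ωn * m₀ * A ^ (2 * n - 1) * C)
          / ENNReal.ofReal (ωn * r ^ (n - 1) * ε₂ ^ 2) := by
      rw [ENNReal.le_div_iff_mul_le (Or.inl (by simp [ENNReal.ofReal_eq_zero]; nlinarith))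
        (Or.inl ENNReal.ofReal_ne_top)]
      rw [mul_comm]; exact key
    refine hdiv.trans ?_
    rw [← ENNReal.ofReal_div_of_pos hcpos]
    apply ENNReal.ofReal_le_ofReal
    rw [div_le_div_iff₀ (by positivity) (by positivity)]
    ring_nf
    nlinarith [pow_pos hrpos (n-1), pow_pos hApos (2*n-1), sq_nonneg ε₂]
  refine ⟨part1, ?_⟩
  -- part 2
  set K : ℝ := A * C * Real.sqrt (r ^ (n - 2) / ξ) with hK
  have hKpos : 0 < K := by
    have : 0 < Real.sqrt (r ^ (n - 2) / ξ) := Real.sqrt_pos.2 (by positivity)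
    positivity
  have hpt : ∀ ρ ∈ B, (φS ρ)⁻¹ ≤ K * (φ ρ)⁻¹ := by
    intro ρ hρ
    have hρI := hBsub hρ
    have hφρ := hφ ρ hρI
    have hlow := hφSlow ρ hρI
    have hφSpos : 0 < φS ρ := hsq.trans_le hlow
    have h1 : (φS ρ)⁻¹ ≤ Real.sqrt (r ^ (n - 2) / ξ) := by
      have hi : (φS ρ)⁻¹ ≤ (Real.sqrt (ξ / r ^ (n - 2)))⁻¹ := by
        apply inv_anti₀ hsq hlow
      calc (φS ρ)⁻¹ ≤ (Real.sqrt (ξ / r ^ (n - 2)))⁻¹ := hi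
        _ = Real.sqrt ((ξ / r ^ (n - 2))⁻¹) := (Real.sqrt_inv _).symm
        _ = Real.sqrt (r ^ (n - 2) / ξ) := by rw [inv_div]
    have h2 : (1:ℝ) ≤ A * C * (φ ρ)⁻¹ := by
      have h2' := (one_le_div hφρ.1).2 hφρ.2
      rwa [div_eq_mul_inv] at h2'
    calc (φS ρ)⁻¹ ≤ Real.sqrt (r ^ (n - 2) / ξ) := h1
      _ ≤ Real.sqrt (r ^ (n - 2) / ξ) * (A * C * (φ ρ)⁻¹) :=
          le_mul_of_one_le_right (Real.sqrt_nonneg _) h2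
      _ = K * (φ ρ)⁻¹ := by rw [hK]; ring
  have step : ∫⁻ ρ in B, ENNReal.ofReal ((φS ρ)⁻¹)
      ≤ ENNReal.ofReal K * ∫⁻ ρ in B, ENNReal.ofReal ((φ ρ)⁻¹) := by
    rw [← lintegral_const_mul _ (f := fun ρ => ENNReal.ofReal ((φ ρ)⁻¹)) (hφm.inv.ennreal_ofReal)]
    apply setLIntegral_mono (measurable_const.mul (hφm.inv.ennreal_ofReal))
    intro ρ hρ
    show ENNReal.ofReal _ ≤ ENNReal.ofReal K * ENNReal.ofReal ((φ ρ)⁻¹)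
    rw [← ENNReal.ofReal_mul hKpos.le]
    exact ENNReal.ofReal_le_ofReal (hpt ρ hρ)
  refine step.trans ?_
  calc ENNReal.ofReal K * ∫⁻ ρ in B, ENNReal.ofReal ((φ ρ)⁻¹)
      ≤ ENNReal.ofReal K *
        ENNReal.ofReal (δ * m₀ * A ^ (2 * n - 1) * C / (r ^ (n - 1) * ε₂ ^ 2)) :=
        mul_le_mul_right part1 _
    _ = ENNReal.ofReal (K * (δ * m₀ * A ^ (2 * n - 1) * C / (r ^ (n - 1) * ε₂ ^ 2))) :=
        (ENNReal.ofReal_mul hKpos.le).symm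
    _ ≤ ENNReal.ofReal (δ * m₀ * A ^ (2 * n) * C ^ 2 / (Real.sqrt (r ^ n * ξ) * ε₂ ^ 2)) := by
        apply ENNReal.ofReal_le_ofReal
        -- sqrt identities
        have hs2 : Real.sqrt (r ^ (n - 2)) * Real.sqrt (r ^ n) = r ^ (n - 1) := by
          rw [← Real.sqrt_mul (by positivity), ← pow_add]
          have he : n - 2 + n = (n - 1) * 2 := by omega
          rw [he, pow_mul, Real.sqrt_sq (by positivity)]
        have hsplit : Real.sqrt (r ^ (n - 2) / ξ)
            = Real.sqrt (r ^ (n - 2)) / Real.sqrt ξ := Real.sqrt_div' _ hξpos.le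
        have hsplit2 : Real.sqrt (r ^ n * ξ) = Real.sqrt (r ^ n) * Real.sqrt ξ :=
          Real.sqrt_mul (by positivity) _
        have hApow : A ^ (2 * n - 1) * A = A ^ (2 * n) := by
          rw [← pow_succ]; congr 1; omega
        have hsn : 0 < Real.sqrt (r ^ n) := Real.sqrt_pos.2 (by positivity)
        have hsξ : 0 < Real.sqrt ξ := Real.sqrt_pos.2 hξpos
        have hs2pos : 0 < Real.sqrt (r ^ (n - 2)) := Real.sqrt_pos.2 (by positivity)
        rw [hK, hsplit, hsplit2, ← hs2, ← hApow]
        apply le_of_eq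
        have hrne : r ^ (n - 1) = Real.sqrt (r ^ (n - 2)) * Real.sqrt (r ^ n) := hs2.symm
        field_simp
end

section
/- Let n ≥ 3 be an integer, ω_{n−1}, ε₃, V_B, D̃ > 0, 0 < a < A, and let φ, φ_S : [a, A] → (0,∞) be measurable. Let W ⊂ [a, A] be measurable and B = [a,A] ∖ W. Assume: (i) (1+ε₃)^{−1}·φ_S(ρ) ≤ φ(ρ) ≤ (1+ε₃)·φ_S(ρ) for all ρ ∈ W; (ii) ω_{n−1}·∫_B ρ^{n−1}φ(ρ)^{−1}dρ ≤ V_B and ω_{n−1}·∫_B ρ^{n−1}φ_S(ρ)^{−1}dρ ≤ V_B; (iii) ∫_a^A φ_S(ρ)^{−1}dρ ≤ D̃. Then |ω_{n−1}·∫_a^A ρ^{n−1}φ(ρ)^{−1}dρ − ω_{n−1}·∫_a^A ρ^{n−1}φ_S(ρ)^{−1}dρ| ≤ 2·V_B + ((1+ε₃)^n − 1)·D̃·A^{n−1}·ω_{n−1}. -/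
open MeasureTheory

/-- Total volume difference estimate for the annulus `{a ≤ ρ ≤ A}`
between the Jang metric and the Schwarzschild metric, from the two-sided metric
comparison on the good region `W`, volume bounds on the bad region `B`, and the
bound `D̃` on the Schwarzschild radial depth. The absolute-value inequality
`|Vol_ḡ − Vol_{g_S}| ≤ 2V_B + ((1+ε₃)^n − 1)·D̃·A^{n−1}·ω_{n−1}` is stated as the
pair of one-sided inequalities in `ℝ≥0∞`. -/
theorem volume_difference_estimate
    (n : ℕ) (hn : 3 ≤ n) (ωn ε₃ VB Dt a A : ℝ)
    (hω : 0 < ωn) (hε₃ : 0 < ε₃) (hVB : 0 < VB) (hDt : 0 < Dt)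
    (ha : 0 < a) (haA : a < A)
    (φ φS : ℝ → ℝ) (hφm : Measurable φ) (hφSm : Measurable φS)
    (hφpos : ∀ ρ ∈ Set.Icc a A, 0 < φ ρ) (hφSpos : ∀ ρ ∈ Set.Icc a A, 0 < φS ρ)
    (W : Set ℝ) (hWm : MeasurableSet W) (hWsub : W ⊆ Set.Icc a A)
    (B : Set ℝ) (hB : B = Set.Icc a A \ W)
    (hcomp : ∀ ρ ∈ W, (1 + ε₃)⁻¹ * φS ρ ≤ φ ρ ∧ φ ρ ≤ (1 + ε₃) * φS ρ)
    (hBφ : ENNReal.ofReal ωn * ∫⁻ ρ in B, ENNReal.ofReal (ρ ^ (n - 1) * (φ ρ)⁻¹)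
        ≤ ENNReal.ofReal VB)
    (hBφS : ENNReal.ofReal ωn * ∫⁻ ρ in B, ENNReal.ofReal (ρ ^ (n - 1) * (φS ρ)⁻¹)
        ≤ ENNReal.ofReal VB)
    (hdepth : ∫⁻ ρ in Set.Icc a A, ENNReal.ofReal ((φS ρ)⁻¹) ≤ ENNReal.ofReal Dt) :
    (ENNReal.ofReal ωn * ∫⁻ ρ in Set.Icc a A, ENNReal.ofReal (ρ ^ (n - 1) * (φ ρ)⁻¹)
      ≤ ENNReal.ofReal ωn * (∫⁻ ρ in Set.Icc a A, ENNReal.ofReal (ρ ^ (n - 1) * (φS ρ)⁻¹))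
        + ENNReal.ofReal (2 * VB + ((1 + ε₃) ^ n - 1) * Dt * A ^ (n - 1) * ωn)) ∧
    (ENNReal.ofReal ωn * ∫⁻ ρ in Set.Icc a A, ENNReal.ofReal (ρ ^ (n - 1) * (φS ρ)⁻¹)
      ≤ ENNReal.ofReal ωn * (∫⁻ ρ in Set.Icc a A, ENNReal.ofReal (ρ ^ (n - 1) * (φ ρ)⁻¹))
        + ENNReal.ofReal (2 * VB + ((1 + ε₃) ^ n - 1) * Dt * A ^ (n - 1) * ωn)) := by
  have hA : 0 < A := ha.trans haA
  have hBmeas : MeasurableSet B := hB ▸ measurableSet_Icc.diff hWm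
  have hUnion : W ∪ B = Set.Icc a A := by rw [hB]; exact Set.union_diff_cancel hWsub
  have hdisj : Disjoint W B := hB ▸ Set.disjoint_sdiff_right
  have hfm : Measurable fun ρ : ℝ => ENNReal.ofReal (ρ ^ (n - 1) * (φ ρ)⁻¹) :=
    ((measurable_id.pow_const (n - 1)).mul hφm.inv).ennreal_ofReal
  have hgm : Measurable fun ρ : ℝ => ENNReal.ofReal (ρ ^ (n - 1) * (φS ρ)⁻¹) :=
    ((measurable_id.pow_const (n - 1)).mul hφSm.inv).ennreal_ofReal
  have hsplitf : ∫⁻ ρ in Set.Icc a A, ENNReal.ofReal (ρ ^ (n - 1) * (φ ρ)⁻¹)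
      = (∫⁻ ρ in W, ENNReal.ofReal (ρ ^ (n - 1) * (φ ρ)⁻¹))
        + ∫⁻ ρ in B, ENNReal.ofReal (ρ ^ (n - 1) * (φ ρ)⁻¹) := by
    rw [← hUnion, lintegral_union hBmeas hdisj]
  have hsplitg : ∫⁻ ρ in Set.Icc a A, ENNReal.ofReal (ρ ^ (n - 1) * (φS ρ)⁻¹)
      = (∫⁻ ρ in W, ENNReal.ofReal (ρ ^ (n - 1) * (φS ρ)⁻¹))
        + ∫⁻ ρ in B, ENNReal.ofReal (ρ ^ (n - 1) * (φS ρ)⁻¹) := by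
    rw [← hUnion, lintegral_union hBmeas hdisj]
  have h1ε : (0:ℝ) < 1 + ε₃ := by linarith
  -- pointwise comparisons on W
  have hptW1 : ∀ ρ ∈ W, ENNReal.ofReal (ρ ^ (n - 1) * (φ ρ)⁻¹)
      ≤ ENNReal.ofReal (1 + ε₃) * ENNReal.ofReal (ρ ^ (n - 1) * (φS ρ)⁻¹) := by
    intro ρ hρ
    have hρI := hWsub hρ
    have hφp := hφpos ρ hρI
    have hφSp := hφSpos ρ hρI
    have hρ0 : (0:ℝ) ≤ ρ := le_trans ha.le hρI.1
    have hinv : (φ ρ)⁻¹ ≤ (1 + ε₃) * (φS ρ)⁻¹ := by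
      calc (φ ρ)⁻¹ ≤ ((1 + ε₃)⁻¹ * φS ρ)⁻¹ := by
            apply inv_anti₀ (by positivity) (hcomp ρ hρ).1
        _ = (1 + ε₃) * (φS ρ)⁻¹ := by rw [mul_inv, inv_inv]
    rw [← ENNReal.ofReal_mul h1ε.le]
    apply ENNReal.ofReal_le_ofReal
    calc ρ ^ (n - 1) * (φ ρ)⁻¹ ≤ ρ ^ (n - 1) * ((1 + ε₃) * (φS ρ)⁻¹) := by
          exact mul_le_mul_of_nonneg_left hinv (by positivity)
      _ = (1 + ε₃) * (ρ ^ (n - 1) * (φS ρ)⁻¹) := by ring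
  have hptW2 : ∀ ρ ∈ W, ENNReal.ofReal (ρ ^ (n - 1) * (φS ρ)⁻¹)
      ≤ ENNReal.ofReal (1 + ε₃) * ENNReal.ofReal (ρ ^ (n - 1) * (φ ρ)⁻¹) := by
    intro ρ hρ
    have hρI := hWsub hρ
    have hφp := hφpos ρ hρI
    have hφSp := hφSpos ρ hρI
    have hρ0 : (0:ℝ) ≤ ρ := le_trans ha.le hρI.1
    have hle : (1 + ε₃)⁻¹ * φ ρ ≤ φS ρ := by
      rw [inv_mul_le_iff₀ h1ε]
      exact (hcomp ρ hρ).2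
    have hinv : (φS ρ)⁻¹ ≤ (1 + ε₃) * (φ ρ)⁻¹ := by
      calc (φS ρ)⁻¹ ≤ ((1 + ε₃)⁻¹ * φ ρ)⁻¹ := by
            apply inv_anti₀ (by positivity) hle
        _ = (1 + ε₃) * (φ ρ)⁻¹ := by rw [mul_inv, inv_inv]
    rw [← ENNReal.ofReal_mul h1ε.le]
    apply ENNReal.ofReal_le_ofReal
    calc ρ ^ (n - 1) * (φS ρ)⁻¹ ≤ ρ ^ (n - 1) * ((1 + ε₃) * (φ ρ)⁻¹) := by
          exact mul_le_mul_of_nonneg_left hinv (by positivity)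
      _ = (1 + ε₃) * (ρ ^ (n - 1) * (φ ρ)⁻¹) := by ring
  -- integral comparisons on W
  have hIW1 : (∫⁻ ρ in W, ENNReal.ofReal (ρ ^ (n - 1) * (φ ρ)⁻¹))
      ≤ ENNReal.ofReal (1 + ε₃) * ∫⁻ ρ in W, ENNReal.ofReal (ρ ^ (n - 1) * (φS ρ)⁻¹) := by
    rw [← lintegral_const_mul _ hgm]
    exact setLIntegral_mono (hgm.const_mul _) hptW1
  have hIW2 : (∫⁻ ρ in W, ENNReal.ofReal (ρ ^ (n - 1) * (φS ρ)⁻¹))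
      ≤ ENNReal.ofReal (1 + ε₃) * ∫⁻ ρ in W, ENNReal.ofReal (ρ ^ (n - 1) * (φ ρ)⁻¹) := by
    rw [← lintegral_const_mul _ hfm]
    exact setLIntegral_mono (hfm.const_mul _) hptW2
  -- depth bound
  have hIg : (∫⁻ ρ in Set.Icc a A, ENNReal.ofReal (ρ ^ (n - 1) * (φS ρ)⁻¹))
      ≤ ENNReal.ofReal (A ^ (n - 1) * Dt) := by
    calc (∫⁻ ρ in Set.Icc a A, ENNReal.ofReal (ρ ^ (n - 1) * (φS ρ)⁻¹))
        ≤ ∫⁻ ρ in Set.Icc a A, ENNReal.ofReal (A ^ (n - 1)) * ENNReal.ofReal ((φS ρ)⁻¹) := by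
          apply setLIntegral_mono (hφSm.inv.ennreal_ofReal.const_mul _)
          intro ρ hρ
          rw [← ENNReal.ofReal_mul (by positivity)]
          apply ENNReal.ofReal_le_ofReal
          have h1 : ρ ^ (n - 1) ≤ A ^ (n - 1) :=
            pow_le_pow_left₀ (le_trans ha.le hρ.1) hρ.2 _
          have h2 : (0:ℝ) ≤ (φS ρ)⁻¹ := (inv_nonneg).2 (hφSpos ρ hρ).le
          exact mul_le_mul_of_nonneg_right h1 h2
      _ = ENNReal.ofReal (A ^ (n - 1)) * ∫⁻ ρ in Set.Icc a A, ENNReal.ofReal ((φS ρ)⁻¹) :=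
          lintegral_const_mul _ hφSm.inv.ennreal_ofReal
      _ ≤ ENNReal.ofReal (A ^ (n - 1)) * ENNReal.ofReal Dt := mul_le_mul_right hdepth _
      _ = ENNReal.ofReal (A ^ (n - 1) * Dt) := (ENNReal.ofReal_mul (by positivity)).symm
  have hIWg : (∫⁻ ρ in W, ENNReal.ofReal (ρ ^ (n - 1) * (φS ρ)⁻¹))
      ≤ ENNReal.ofReal (A ^ (n - 1) * Dt) :=
    (lintegral_mono_set hWsub).trans hIg
  have hoR : ENNReal.ofReal (1 + ε₃) = 1 + ENNReal.ofReal ε₃ := by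
    rw [ENNReal.ofReal_add (by norm_num) hε₃.le, ENNReal.ofReal_one]
  have hpow1 : 1 + ε₃ ≤ (1 + ε₃) ^ n := by
    calc 1 + ε₃ = (1 + ε₃) ^ 1 := (pow_one _).symm
      _ ≤ (1 + ε₃) ^ n := pow_le_pow_right₀ (by linarith) (by omega)
  have hpow2 : (1 + ε₃) ^ 2 ≤ (1 + ε₃) ^ n := pow_le_pow_right₀ (by linarith) (by omega)
  constructor
  · calc ENNReal.ofReal ωn * ∫⁻ ρ in Set.Icc a A, ENNReal.ofReal (ρ ^ (n - 1) * (φ ρ)⁻¹)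
        = ENNReal.ofReal ωn * (∫⁻ ρ in W, ENNReal.ofReal (ρ ^ (n - 1) * (φ ρ)⁻¹))
          + ENNReal.ofReal ωn * ∫⁻ ρ in B, ENNReal.ofReal (ρ ^ (n - 1) * (φ ρ)⁻¹) := by
          rw [hsplitf, mul_add]
      _ ≤ ENNReal.ofReal ωn *
            (ENNReal.ofReal (1 + ε₃) * ∫⁻ ρ in W, ENNReal.ofReal (ρ ^ (n - 1) * (φS ρ)⁻¹))
          + ENNReal.ofReal VB := add_le_add (mul_le_mul_right hIW1 _) hBφ
      _ = ENNReal.ofReal ωn * (∫⁻ ρ in W, ENNReal.ofReal (ρ ^ (n - 1) * (φS ρ)⁻¹))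
          + (ENNReal.ofReal ε₃ * (ENNReal.ofReal ωn *
              ∫⁻ ρ in W, ENNReal.ofReal (ρ ^ (n - 1) * (φS ρ)⁻¹))
            + ENNReal.ofReal VB) := by rw [hoR]; ring
      _ ≤ ENNReal.ofReal ωn * (∫⁻ ρ in Set.Icc a A, ENNReal.ofReal (ρ ^ (n - 1) * (φS ρ)⁻¹))
          + (ENNReal.ofReal ε₃ * (ENNReal.ofReal ωn * ENNReal.ofReal (A ^ (n - 1) * Dt))
            + ENNReal.ofReal VB) := by
          gcongr <;> first
          | exact lintegral_mono_set hWsub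
          | exact hIWg
      _ ≤ ENNReal.ofReal ωn * (∫⁻ ρ in Set.Icc a A, ENNReal.ofReal (ρ ^ (n - 1) * (φS ρ)⁻¹))
          + ENNReal.ofReal (2 * VB + ((1 + ε₃) ^ n - 1) * Dt * A ^ (n - 1) * ωn) := by
          gcongr
          rw [← ENNReal.ofReal_mul hω.le, ← ENNReal.ofReal_mul hε₃.le,
            ← ENNReal.ofReal_add (by positivity) hVB.le]
          apply ENNReal.ofReal_le_ofReal
          have hterm : 0 ≤ ((1 + ε₃) ^ n - 1 - ε₃) * (Dt * (A ^ (n - 1) * ωn)) :=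
            mul_nonneg (by linarith) (by positivity)
          nlinarith [hterm, hVB.le]
  · calc ENNReal.ofReal ωn * ∫⁻ ρ in Set.Icc a A, ENNReal.ofReal (ρ ^ (n - 1) * (φS ρ)⁻¹)
        = ENNReal.ofReal ωn * (∫⁻ ρ in W, ENNReal.ofReal (ρ ^ (n - 1) * (φS ρ)⁻¹))
          + ENNReal.ofReal ωn * ∫⁻ ρ in B, ENNReal.ofReal (ρ ^ (n - 1) * (φS ρ)⁻¹) := by
          rw [hsplitg, mul_add]
      _ ≤ ENNReal.ofReal ωn *
            (ENNReal.ofReal (1 + ε₃) * ∫⁻ ρ in W, ENNReal.ofReal (ρ ^ (n - 1) * (φ ρ)⁻¹))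
          + ENNReal.ofReal VB := add_le_add (mul_le_mul_right hIW2 _) hBφS
      _ = ENNReal.ofReal ωn * (∫⁻ ρ in W, ENNReal.ofReal (ρ ^ (n - 1) * (φ ρ)⁻¹))
          + (ENNReal.ofReal ε₃ * (ENNReal.ofReal ωn *
              ∫⁻ ρ in W, ENNReal.ofReal (ρ ^ (n - 1) * (φ ρ)⁻¹))
            + ENNReal.ofReal VB) := by rw [hoR]; ring
      _ ≤ ENNReal.ofReal ωn * (∫⁻ ρ in Set.Icc a A, ENNReal.ofReal (ρ ^ (n - 1) * (φ ρ)⁻¹))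
          + (ENNReal.ofReal ε₃ * (ENNReal.ofReal ωn *
              ENNReal.ofReal ((1 + ε₃) * (A ^ (n - 1) * Dt)))
            + ENNReal.ofReal VB) := by
          gcongr
          · calc (∫⁻ ρ in W, ENNReal.ofReal (ρ ^ (n - 1) * (φ ρ)⁻¹))
                ≤ ENNReal.ofReal (1 + ε₃) *
                    ∫⁻ ρ in W, ENNReal.ofReal (ρ ^ (n - 1) * (φS ρ)⁻¹) := hIW1
              _ ≤ ENNReal.ofReal (1 + ε₃) * ENNReal.ofReal (A ^ (n - 1) * Dt) :=
                  mul_le_mul_right hIWg _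
              _ = ENNReal.ofReal ((1 + ε₃) * (A ^ (n - 1) * Dt)) :=
                  (ENNReal.ofReal_mul h1ε.le).symm
      _ ≤ ENNReal.ofReal ωn * (∫⁻ ρ in Set.Icc a A, ENNReal.ofReal (ρ ^ (n - 1) * (φ ρ)⁻¹))
          + ENNReal.ofReal (2 * VB + ((1 + ε₃) ^ n - 1) * Dt * A ^ (n - 1) * ωn) := by
          gcongr
          rw [← ENNReal.ofReal_mul hω.le, ← ENNReal.ofReal_mul hε₃.le,
            ← ENNReal.ofReal_add (by positivity) hVB.le]
          apply ENNReal.ofReal_le_ofReal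
          have hterm : 0 ≤ ((1 + ε₃) ^ n - 1 - ε₃ * (1 + ε₃)) * (Dt * (A ^ (n - 1) * ωn)) :=
            mul_nonneg (by nlinarith) (by positivity)
          nlinarith [hterm, hVB.le]
end
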